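/- arXiv:1502.04520 — 8 statements merged into one kernel-verified Lean document; each statement's English description precedes it below -/
import Mathlib

section
/- Let 𝒜 be an operator algebra with a bounded approximate unit (u_λ), and let π : 𝒜 → B(H) be a bounded algebra homomorphism into the bounded operators on a complex Hilbert space H. Then the net (π(u_λ)) converges in the strong operator topology to an idempotent q ∈ B(H) with the following properties: (1) qπ(a) = π(a)q = π(a) for all a ∈ 𝒜; (2) the range of q equals the closed linear span of {π(a)h : a ∈ 𝒜, h ∈ H}; (3) the range of 1 − q equals {h ∈ H : π(a)h = 0 for all a ∈ 𝒜}; (4) ‖q‖ ≤ ‖π‖ · sup_λ ‖u_λ‖. -/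
/-!
On the closure `K` of the span of `π(𝒜)H` the operators `π(u_λ)` converge strongly to the
identity: they do so on each `π(a)h` because `u_λ` is a left approximate unit, and they are
uniformly bounded. For arbitrary `h`, a weak cluster point `g` of `π(u_λ)h` (Banach–Alaoglu) lies
in `K` and satisfies `π(a)g = π(a)h` because `u_λ` is a right approximate unit; hence
`π(u_λ)h = π(u_λ)g → g`. The strong limit `q` fixes `K`, maps into `K` and kills exactly the common
null space of `π(𝒜)`.
-/

open Filter Topology
open scoped InnerProductSpace

noncomputable instance NonUnitalSubalgebra.normedSpaceOfCLM {H₀ : Type*} [NormedAddCommGroup H₀]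
    [InnerProductSpace ℂ H₀] (A : NonUnitalSubalgebra ℂ (H₀ →L[ℂ] H₀)) : NormedSpace ℂ A :=
  SubmoduleClass.toNormedSpace (R := ℂ) A

section WeakLimits

variable {𝕜 H ι : Type*} [RCLike 𝕜] [NormedAddCommGroup H] [InnerProductSpace 𝕜 H]

theorem exists_ultrafilter_tendsto_inner [CompleteSpace H] {x : ι → H} {R : ℝ}
    (hx : ∀ i, ‖x i‖ ≤ R) (f : Filter ι) [f.NeBot] :
    ∃ 𝒰 : Ultrafilter ι, ↑𝒰 ≤ f ∧
      ∃ g : H, ∀ w, Tendsto (fun i => ⟪x i, w⟫_𝕜) 𝒰 (𝓝 ⟪g, w⟫_𝕜) := by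
  let y : ι → WeakDual 𝕜 H := fun i => StrongDual.toWeakDual (InnerProductSpace.toDual 𝕜 H (x i))
  have hy : (Ultrafilter.map y (Ultrafilter.of f) : Filter (WeakDual 𝕜 H)) ≤
      𝓟 (WeakDual.toStrongDual ⁻¹' Metric.closedBall (0 : StrongDual 𝕜 H) R) := by
    rw [Ultrafilter.coe_map, le_principal_iff]
    exact Filter.mem_map.2 (Filter.univ_mem' fun i => by simpa [y] using hx i)
  obtain ⟨F, -, hF⟩ :=
    (WeakDual.isCompact_closedBall (𝕜 := 𝕜) (E := H) 0 R).ultrafilter_le_nhds _ hy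
  refine ⟨Ultrafilter.of f, Ultrafilter.of_le f,
    (InnerProductSpace.toDual 𝕜 H).symm (WeakDual.toStrongDual F), fun w => ?_⟩
  simpa [y, Function.comp_def] using ((WeakDual.eval_continuous w).tendsto F).comp hF

theorem Submodule.mem_topologicalClosure_of_tendsto_inner [CompleteSpace H] {K : Submodule 𝕜 H}
    {x : ι → H} (hx : ∀ i, x i ∈ K) {f : Filter ι} [f.NeBot] {g : H}
    (hg : ∀ w, Tendsto (fun i => ⟪x i, w⟫_𝕜) f (𝓝 ⟪g, w⟫_𝕜)) :
    g ∈ K.topologicalClosure := by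
  rw [← K.orthogonal_orthogonal_eq_closure, Submodule.mem_orthogonal']
  intro w hw
  refine tendsto_nhds_unique (hg w) (tendsto_const_nhds.congr fun i => ?_)
  exact (Submodule.inner_right_of_mem_orthogonal (hx i) hw).symm

end WeakLimits

theorem ContinuousLinearMap.exists_eq_of_tendsto_apply {𝕜 E F ι : Type*}
    [NontriviallyNormedField 𝕜]
    [NormedAddCommGroup E] [NormedSpace 𝕜 E] [NormedAddCommGroup F] [NormedSpace 𝕜 F]
    {T : ι → E →L[𝕜] F} {M : ℝ} (hT : ∀ i, ‖T i‖ ≤ M) {f : Filter ι} [f.NeBot] {g : E → F}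
    (hg : ∀ x, Tendsto (fun i => T i x) f (𝓝 (g x))) :
    ∃ q : E →L[𝕜] F, ⇑q = g ∧ ‖q‖ ≤ M := by
  obtain ⟨i⟩ := f.nonempty_of_neBot
  have hM : 0 ≤ M := (norm_nonneg _).trans (hT i)
  have hbound : ∀ x, ‖g x‖ ≤ M * ‖x‖ := fun x =>
    le_of_tendsto' (hg x).norm fun i => (T i).le_of_opNorm_le (hT i) x
  let L : E →ₗ[𝕜] F := linearMapOfTendsto g (fun i => (T i : E →ₗ[𝕜] F)) (tendsto_pi_nhds.2 hg)
  exact ⟨L.mkContinuous M hbound, rfl, LinearMap.mkContinuous_norm_le _ hM _⟩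

section EssentialSubspace

variable {𝕜 H A ι : Type*} [RCLike 𝕜] [NormedAddCommGroup H] [InnerProductSpace 𝕜 H]

def essentialSubspace (ρ : A → H →L[𝕜] H) : Submodule 𝕜 H :=
  (Submodule.span 𝕜 {x | ∃ (a : A) (h : H), ρ a h = x}).topologicalClosure

variable {ρ : A → H →L[𝕜] H} {u : ι → A} {f : Filter ι} {M : ℝ}

theorem apply_mem_span_apply (a : A) (h : H) :
    ρ a h ∈ Submodule.span 𝕜 {x | ∃ (a : A) (h : H), ρ a h = x} :=
  Submodule.subset_span ⟨a, h, rfl⟩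

theorem apply_mem_essentialSubspace (a : A) (h : H) : ρ a h ∈ essentialSubspace ρ :=
  Submodule.le_topologicalClosure _ (apply_mem_span_apply a h)

theorem tendsto_apply_of_mem_essentialSubspace (hbound : ∀ i, ‖ρ (u i)‖ ≤ M)
    (hleft : ∀ a h, Tendsto (fun i => ρ (u i) (ρ a h)) f (𝓝 (ρ a h)))
    {k : H} (hk : k ∈ essentialSubspace ρ) : Tendsto (fun i => ρ (u i) k) f (𝓝 k) := by
  have hequi : Equicontinuous fun i => ⇑(ρ (u i)) :=
    ((NormedSpace.equicontinuous_TFAE fun i : ι => ρ (u i)).out 5 1).mp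
      (⟨M, hbound⟩ : ∃ C, ∀ i, ‖ρ (u i)‖ ≤ C)
  have hclosed : IsClosed {x : H | Tendsto (fun i => ρ (u i) x) f (𝓝 x)} :=
    hequi.isClosed_setOfPred_tendsto continuous_id
  refine closure_minimal (fun x hx => ?_) hclosed hk
  induction hx using Submodule.span_induction with
  | mem x hx => obtain ⟨a, h, rfl⟩ := hx; exact hleft a h
  | zero => simpa using tendsto_const_nhds
  | add x y _ _ hx hy => simpa using hx.add hy
  | smul c x _ hx => simpa using hx.const_smul c

theorem exists_mem_essentialSubspace_apply_eq [CompleteSpace H] [f.NeBot]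
    (hbound : ∀ i, ‖ρ (u i)‖ ≤ M)
    (hright : ∀ a h, Tendsto (fun i => ρ a (ρ (u i) h)) f (𝓝 (ρ a h))) (h : H) :
    ∃ g ∈ essentialSubspace ρ, ∀ a, ρ a g = ρ a h := by
  obtain ⟨𝒰, h𝒰, g, hg⟩ := exists_ultrafilter_tendsto_inner (𝕜 := 𝕜) (x := fun i => ρ (u i) h)
    (fun i => (ρ (u i)).le_of_opNorm_le (hbound i) h) f
  refine ⟨g, Submodule.mem_topologicalClosure_of_tendsto_inner
    (fun i => apply_mem_span_apply (u i) h) hg, fun a => ext_inner_right 𝕜 fun w => ?_⟩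
  -- `⟪ρ a g, w⟫ = lim ⟪ρ (u i) h, (ρ a)† w⟫ = lim ⟪ρ a (ρ (u i) h), w⟫ = ⟪ρ a h, w⟫`
  have hlim := hg (ContinuousLinearMap.adjoint (ρ a) w)
  simp only [ContinuousLinearMap.adjoint_inner_right] at hlim
  exact tendsto_nhds_unique hlim (((hright a h).mono_left h𝒰).inner tendsto_const_nhds)

theorem exists_tendsto_apply_of_approxUnit [CompleteSpace H] [f.NeBot]
    (hbound : ∀ i, ‖ρ (u i)‖ ≤ M)
    (hleft : ∀ a h, Tendsto (fun i => ρ (u i) (ρ a h)) f (𝓝 (ρ a h)))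
    (hright : ∀ a h, Tendsto (fun i => ρ a (ρ (u i) h)) f (𝓝 (ρ a h))) (h : H) :
    ∃ g ∈ essentialSubspace ρ, (∀ a, ρ a g = ρ a h) ∧
      Tendsto (fun i => ρ (u i) h) f (𝓝 g) := by
  obtain ⟨g, hgE, hgρ⟩ := exists_mem_essentialSubspace_apply_eq hbound hright h
  exact ⟨g, hgE, hgρ, (tendsto_apply_of_mem_essentialSubspace hbound hleft hgE).congr
    fun i => hgρ (u i)⟩

theorem exists_idempotent_tendsto_of_approxUnit [CompleteSpace H] [f.NeBot]
    (hbound : ∀ i, ‖ρ (u i)‖ ≤ M)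
    (hleft : ∀ a h, Tendsto (fun i => ρ (u i) (ρ a h)) f (𝓝 (ρ a h)))
    (hright : ∀ a h, Tendsto (fun i => ρ a (ρ (u i) h)) f (𝓝 (ρ a h))) :
    ∃ q : H →L[𝕜] H,
      (∀ h, Tendsto (fun i => ρ (u i) h) f (𝓝 (q h))) ∧
      q * q = q ∧
      (∀ a, q * ρ a = ρ a ∧ ρ a * q = ρ a) ∧
      Set.range q = essentialSubspace ρ ∧
      Set.range ⇑(1 - q) = {h | ∀ a, ρ a h = 0} ∧
      ‖q‖ ≤ M := by
  choose g hgE hgρ hgT using exists_tendsto_apply_of_approxUnit hbound hleft hright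
  obtain ⟨q, rfl, hqM⟩ := ContinuousLinearMap.exists_eq_of_tendsto_apply hbound hgT
  have hfix : ∀ k ∈ essentialSubspace ρ, q k = k := fun k hk =>
    tendsto_nhds_unique (hgT k) (tendsto_apply_of_mem_essentialSubspace hbound hleft hk)
  refine ⟨q, hgT, ?_, fun a => ⟨?_, ?_⟩, ?_, ?_, hqM⟩
  · ext h; exact hfix _ (hgE h)
  · ext h; exact hfix _ (apply_mem_essentialSubspace a h)
  · ext h; exact hgρ h a
  · refine subset_antisymm (Set.range_subset_iff.2 hgE) fun k hk => ⟨k, hfix k hk⟩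
  · refine subset_antisymm (Set.range_subset_iff.2 fun h a => ?_) fun h hh => ⟨h, ?_⟩
    · simp [hgρ]
    · have hq : q h = 0 :=
        tendsto_nhds_unique (hgT h) (tendsto_const_nhds.congr fun i => (hh (u i)).symm)
      simp [hq]

end EssentialSubspace

theorem statement0_general
    {H₀ H : Type*} [NormedAddCommGroup H₀] [InnerProductSpace ℂ H₀] [CompleteSpace H₀]
    [NormedAddCommGroup H] [InnerProductSpace ℂ H] [CompleteSpace H]
    -- the operator algebra 𝒜 : a closed (not necessarily unital) subalgebra of B(H₀)
    (A : NonUnitalSubalgebra ℂ (H₀ →L[ℂ] H₀))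
    -- a bounded approximate unit (u_λ), indexed by a directed set ι
    {ι : Type*} [Preorder ι] [IsDirected ι (· ≤ ·)] [Nonempty ι]
    (u : ι → A) (C : ℝ) (huC : ∀ l, ‖u l‖ ≤ C)
    (hu_left : ∀ a : A, Tendsto (fun l => ‖u l * a - a‖) atTop (𝓝 0))
    (hu_right : ∀ a : A, Tendsto (fun l => ‖a * u l - a‖) atTop (𝓝 0))
    -- a bounded (continuous linear, multiplicative) representation π : 𝒜 → B(H)
    (π : A →L[ℂ] (H →L[ℂ] H)) (hπ : ∀ a b : A, π (a * b) = π a * π b) :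
    ∃ q : H →L[ℂ] H,
      -- strong operator convergence of π(u_λ) to q
      (∀ h : H, Tendsto (fun l => π (u l) h) atTop (𝓝 (q h))) ∧
      -- q is an idempotent
      q * q = q ∧
      -- (1)
      (∀ a : A, q * π a = π a ∧ π a * q = π a) ∧
      -- (2)
      Set.range q =
        closure ((Submodule.span ℂ {x : H | ∃ (a : A) (h : H), π a h = x} : Submodule ℂ H) : Set H) ∧
      -- (3)
      Set.range ((1 : H →L[ℂ] H) - q) = {h : H | ∀ a : A, π a h = 0} ∧
      -- (4)
      ‖q‖ ≤ ‖π‖ * C := by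
  have hbound : ∀ l, ‖π (u l)‖ ≤ ‖π‖ * C := fun l => π.le_opNorm_of_le (huC l)
  have hstrong : ∀ {v : ι → A} {a : A}, Tendsto (fun l => ‖v l - a‖) atTop (𝓝 0) →
      ∀ h, Tendsto (fun l => π (v l) h) atTop (𝓝 (π a h)) := fun hv h =>
    ((continuous_eval_const h).tendsto _).comp
      ((π.continuous.tendsto _).comp (tendsto_iff_norm_sub_tendsto_zero.2 hv))
  have hleft : ∀ a h, Tendsto (fun l => π (u l) (π a h)) atTop (𝓝 (π a h)) := fun a h => by
    simpa only [hπ, mul_apply_eq_comp] using hstrong (hu_left a) h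
  have hright : ∀ a h, Tendsto (fun l => π a (π (u l) h)) atTop (𝓝 (π a h)) := fun a h => by
    simpa only [hπ, mul_apply_eq_comp] using hstrong (hu_right a) h
  exact exists_idempotent_tendsto_of_approxUnit hbound hleft hright

/-- Let `𝒜` be an operator algebra (a norm-closed, not necessarily
unital or self-adjoint, subalgebra of the bounded operators on a complex Hilbert space `H₀`)
with a bounded approximate unit `(u_λ)`, and let `π : 𝒜 → B(H)` be a bounded algebra
homomorphism.  Then the net `(π(u_λ))` converges in the strong operator topology to an
idempotent `q ∈ B(H)` such that:
(1) `qπ(a) = π(a)q = π(a)` for all `a ∈ 𝒜`;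
(2) the range of `q` equals the closed linear span of `{π(a)h : a ∈ 𝒜, h ∈ H}`;
(3) the range of `1 − q` equals `{h ∈ H : π(a)h = 0 for all a ∈ 𝒜}`;
(4) `‖q‖ ≤ ‖π‖ · C` for any bound `C` on the norms of the `u_λ`. -/
theorem statement0
    {H₀ H : Type*} [NormedAddCommGroup H₀] [InnerProductSpace ℂ H₀] [CompleteSpace H₀]
    [NormedAddCommGroup H] [InnerProductSpace ℂ H] [CompleteSpace H]
    -- the operator algebra 𝒜 : a closed (not necessarily unital) subalgebra of B(H₀)
    (A : NonUnitalSubalgebra ℂ (H₀ →L[ℂ] H₀)) (hA : IsClosed (A : Set (H₀ →L[ℂ] H₀)))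
    -- a bounded approximate unit (u_λ), indexed by a directed set ι
    {ι : Type*} [Preorder ι] [IsDirected ι (· ≤ ·)] [Nonempty ι]
    (u : ι → A) (C : ℝ) (huC : ∀ l, ‖u l‖ ≤ C)
    (hu_left : ∀ a : A, Tendsto (fun l => ‖u l * a - a‖) atTop (𝓝 0))
    (hu_right : ∀ a : A, Tendsto (fun l => ‖a * u l - a‖) atTop (𝓝 0))
    -- a bounded (continuous linear, multiplicative) representation π : 𝒜 → B(H)
    (π : A →L[ℂ] (H →L[ℂ] H)) (hπ : ∀ a b : A, π (a * b) = π a * π b) :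
    ∃ q : H →L[ℂ] H,
      -- strong operator convergence of π(u_λ) to q
      (∀ h : H, Tendsto (fun l => π (u l) h) atTop (𝓝 (q h))) ∧
      -- q is an idempotent
      q * q = q ∧
      -- (1)
      (∀ a : A, q * π a = π a ∧ π a * q = π a) ∧
      -- (2)
      Set.range q =
        closure ((Submodule.span ℂ {x : H | ∃ (a : A) (h : H), π a h = x} : Submodule ℂ H) : Set H) ∧
      -- (3)
      Set.range ((1 : H →L[ℂ] H) - q) = {h : H | ∀ a : A, π a h = 0} ∧
      -- (4)
      ‖q‖ ≤ ‖π‖ * C :=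
  statement0_general A u C huC hu_left hu_right π hπ
end

section
/- Let A be a Banach algebra equipped with a continuous involution *, and suppose A has a bounded approximate unit. Let D ⊆ A be a dense right ideal and c : D → A a linear map satisfying c(ab) = (c(a))b for all a ∈ D, b ∈ A, and (c(a))*b = a*(c(b)) for all a, b ∈ D (a symmetric multiplier). Then c is closable: whenever (a_n) is a sequence in D with a_n → 0 and c(a_n) → b in A, one has b = 0. -/
set_option synthInstance.maxHeartbeats 1000000
set_option maxHeartbeats 1000000

open Filter Topology

/-- Let `A` be a Banach algebra with a continuous involution `*` and a
bounded approximate unit.  Let `D ⊆ A` be a dense right ideal and `c : D → A` a linear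
map satisfying `c(ab) = (c a)b` for `a ∈ D, b ∈ A` and `(c a)* b = a* (c b)` for
`a, b ∈ D` (a symmetric multiplier).  Then `c` is closable: whenever `(a_n)` is a
sequence in `D` with `a_n → 0` and `c(a_n) → b` in `A`, one has `b = 0`. -/
theorem statement3
    {A : Type*} [NonUnitalNormedRing A] [NormedSpace ℂ A]
    [IsScalarTower ℂ A A] [SMulCommClass ℂ A A] [CompleteSpace A]
    [StarRing A] [StarModule ℂ A] [ContinuousStar A]
    -- a bounded approximate unit (u_λ), indexed by a directed set ι
    {ι : Type*} [Preorder ι] [IsDirected ι (· ≤ ·)] [Nonempty ι]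
    (u : ι → A) (C : ℝ) (huC : ∀ l, ‖u l‖ ≤ C)
    (hu_left : ∀ a : A, Tendsto (fun l => ‖u l * a - a‖) atTop (𝓝 0))
    (hu_right : ∀ a : A, Tendsto (fun l => ‖a * u l - a‖) atTop (𝓝 0))
    -- a dense right ideal D
    (D : Submodule ℂ A) (hDdense : Dense (D : Set A))
    (hDideal : ∀ d ∈ D, ∀ a : A, d * a ∈ D)
    -- a symmetric multiplier c : D → A
    (c : D →ₗ[ℂ] A)
    (hmul : ∀ (d : D) (a : A) (h : (d : A) * a ∈ D), c ⟨(d : A) * a, h⟩ = c d * a)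
    (hsym : ∀ d e : D, star (c d) * (e : A) = star (d : A) * c e) :
    -- c is closable
    ∀ (a : ℕ → D) (b : A),
      Tendsto (fun n => ((a n : A))) atTop (𝓝 0) →
      Tendsto (fun n => c (a n)) atTop (𝓝 b) →
      b = 0 := by
  intro a b ha hb
  -- Step 1: star b * d = 0 for all d ∈ D
  have h1 : ∀ d : D, star b * (d : A) = 0 := by
    intro d
    have hL : Tendsto (fun n => star (c (a n)) * (d : A)) atTop (𝓝 (star b * (d : A))) :=
      ((continuous_star.tendsto b).comp hb).mul tendsto_const_nhds
    have hR : Tendsto (fun n => star ((a n : A)) * c d) atTop (𝓝 (star b * (d : A))) := by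
      simpa only [hsym] using hL
    have hR0 : Tendsto (fun n => star ((a n : A)) * c d) atTop (𝓝 0) := by
      have := (((continuous_star.tendsto (0 : A)).comp ha).mul
        (tendsto_const_nhds (x := c d)))
      simpa using this
    exact tendsto_nhds_unique hR hR0
  -- Step 2: star b * x = 0 for all x, by density
  have h2 : ∀ x : A, star b * x = 0 := by
    intro x
    have hcl : IsClosed {x : A | star b * x = 0} :=
      isClosed_eq (continuous_mul_left _) continuous_const
    have hsub : (D : Set A) ⊆ {x : A | star b * x = 0} := fun y hy => h1 ⟨y, hy⟩
    have : closure (D : Set A) ⊆ {x : A | star b * x = 0} := hcl.closure_subset_iff.mpr hsub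
    exact this (hDdense x)
  -- Step 3: star b = 0 using the approximate unit
  have h3 : Tendsto (fun l => ‖star b * u l - star b‖) atTop (𝓝 0) := hu_right (star b)
  have h4 : (fun l : ι => ‖star b * u l - star b‖) = fun _ => ‖star b‖ := by
    funext l; rw [h2 (u l), zero_sub, norm_neg]
  rw [h4] at h3
  have h5 : ‖star b‖ = 0 := tendsto_nhds_unique tendsto_const_nhds h3
  have : star b = 0 := norm_eq_zero.mp h5
  simpa using congrArg star this
end

section
/- Let D be a closed symmetric densely defined operator on a complex Hilbert space H (so D ⊆ D*), and let 𝒜 ⊆ B(H) be a subalgebra closed under adjoints such that every a ∈ 𝒜 maps Dom D* into Dom D and the commutator [D*,a] := Da − aD*, defined on Dom D*, is bounded. Let p be the orthogonal projection onto the closed linear span of {ah : a ∈ 𝒜, h ∈ H}. Suppose (u_n) is a sequence in 𝒜 with sup_n (‖u_n‖ + ‖[D*,u_n]‖) < ∞ such that for every a ∈ 𝒜: ‖u_na − a‖ → 0, ‖au_n − a‖ → 0, ‖[D*, u_na − a]‖ → 0 and ‖[D*, au_n − a]‖ → 0. Then: (1) u_n → p and u_n* → p in the strong operator topology; (2) p[D*,u_n]p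 → 0 in the strong operator topology; (3) if in addition the sequence (Du_ne) converges in H for every e ∈ Dom D*, then p maps Dom D* into Dom D, the operator Dp − pD* is bounded on Dom D*, and [D*,u_n]e → (Dp − pD*)e for every e ∈ Dom D*. -/
open Filter Topology
open scoped Classical

/-- Application of a partially defined operator, with junk value `0` off the domain. -/
noncomputable def pApply {H : Type*} [NormedAddCommGroup H] [InnerProductSpace ℂ H]
    (D : H →ₗ.[ℂ] H) (x : H) : H :=
  if hm : x ∈ D.domain then D ⟨x, hm⟩ else 0

/-!
The strong limit of a bounded approximate unit is the identity on the essential subspace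
`span {a h}` (approximate unit property plus equicontinuity), and every `a ∈ 𝒜` vanishes on its
orthogonal complement because `a*` maps into it; hence `uₙ → p` strongly, and likewise `uₙ* → p`
since `uₙ*` is again an approximate unit.
On a vector `a h` with `h ∈ Dom D*` one has `a h ∈ Dom D` and
`[D*, uₙ](a h) = [D*, uₙ a - a] h + (1 - uₙ) [D*, a] h → (1 - p) [D*, a] h`, which `p` kills;
these vectors span a dense subspace of the range of `p`, and `p [D*, uₙ]` is uniformly bounded.
Finally, closedness of `D` turns `uₙ e → p e` and the convergence of `D uₙ e` into
`p e ∈ Dom D`, and the bound on `[D*, p]` is inherited from the uniform bound on `[D*, uₙ]`.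
-/

section BoundedFamilies

variable {ι 𝕜 E F : Type*} [NontriviallyNormedField 𝕜] [SeminormedAddCommGroup E]
  [NormedSpace 𝕜 E] [NormedAddCommGroup F] [NormedSpace 𝕜 F]

theorem ContinuousLinearMap.tendsto_of_mem_closure_span {l : Filter ι} {f : ι → E →L[𝕜] F}
    {C : ℝ} (hC : ∀ i x, ‖f i x‖ ≤ C * ‖x‖) (g : E →L[𝕜] F) {s : Set E}
    (hs : ∀ x ∈ s, Tendsto (fun i => f i x) l (𝓝 (g x))) {x : E}
    (hx : x ∈ closure (Submodule.span 𝕜 s : Set E)) :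
    Tendsto (fun i => f i x) l (𝓝 (g x)) := by
  have hbdd : ∃ C, ∀ i x, ‖f i x‖ ≤ C * ‖x‖ := ⟨C, hC⟩
  have hequi : Equicontinuous ((↑) ∘ f) := ((NormedSpace.equicontinuous_TFAE f).out 3 1).mp hbdd
  refine (hequi.isClosed_setOfPred_tendsto g.continuous).closure_subset_iff.mpr
    (fun y hy => ?_) hx
  induction hy using Submodule.span_induction with
  | mem y hy => exact hs y hy
  | zero => simpa using tendsto_const_nhds
  | add y z _ _ hy hz => simpa using hy.add hz
  | smul c y _ hy => simpa using hy.const_smul c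

theorem ContinuousLinearMap.norm_apply_le_of_dense {T : E →L[𝕜] F} {s : Set E} (hs : Dense s)
    {C : ℝ} (hC : ∀ x ∈ s, ‖T x‖ ≤ C * ‖x‖) (x : E) : ‖T x‖ ≤ C * ‖x‖ :=
  (isClosed_le (T.continuous.norm) (continuous_const.mul continuous_norm)).closure_subset_iff.mpr
    hC (hs x)

end BoundedFamilies

section PartialApplication

variable {H : Type*} [NormedAddCommGroup H] [InnerProductSpace ℂ H]

lemma pApply_of_mem (D : H →ₗ.[ℂ] H) {x : H} (hx : x ∈ D.domain) : pApply D x = D ⟨x, hx⟩ :=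
  dif_pos hx

lemma pApply_coe (D : H →ₗ.[ℂ] H) (x : D.domain) : pApply D x = D x :=
  pApply_of_mem D x.2

lemma pApply_sub (D : H →ₗ.[ℂ] H) {x y : H} (hx : x ∈ D.domain) (hy : y ∈ D.domain) :
    pApply D (x - y) = pApply D x - pApply D y := by
  rw [pApply_of_mem D (sub_mem hx hy), pApply_of_mem D hx, pApply_of_mem D hy, ← D.map_sub]
  rfl

lemma pApply_of_le {D E : H →ₗ.[ℂ] H} (hDE : D ≤ E) {x : H} (hx : x ∈ D.domain) :
    pApply E x = pApply D x := by
  rw [pApply_of_mem E (hDE.1 hx), pApply_of_mem D hx]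
  exact (hDE.2 rfl).symm

lemma mem_graph_iff_pApply (D : H →ₗ.[ℂ] H) {x y : H} :
    (x, y) ∈ D.graph ↔ x ∈ D.domain ∧ pApply D x = y := by
  rw [D.mem_graph_iff]
  constructor
  · rintro ⟨z, rfl, rfl⟩
    exact ⟨z.2, pApply_coe D z⟩
  · rintro ⟨hx, rfl⟩
    exact ⟨⟨x, hx⟩, rfl, (pApply_of_mem D hx).symm⟩

lemma LinearPMap.IsClosed.pApply_eq_of_tendsto {ι : Type*} {l : Filter ι} [l.NeBot]
    {D : H →ₗ.[ℂ] H} (hD : D.IsClosed) {x : ι → H} (hxD : ∀ i, x i ∈ D.domain) {x₀ y₀ : H}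
    (hx : Tendsto x l (𝓝 x₀)) (hy : Tendsto (fun i => pApply D (x i)) l (𝓝 y₀)) :
    x₀ ∈ D.domain ∧ pApply D x₀ = y₀ :=
  (mem_graph_iff_pApply D).mp <| hD.mem_of_tendsto (hx.prodMk_nhds hy) <|
    Eventually.of_forall fun i => (mem_graph_iff_pApply D).mpr ⟨hxD i, rfl⟩

end PartialApplication

lemma norm_star_mul_sub_eq {R : Type*} [NonUnitalNormedRing R] [StarRing R] [NormedStarGroup R]
    (a v : R) : ‖star v * a - a‖ = ‖star a * v - star a‖ := by
  rw [← norm_star (star a * v - star a), star_sub, star_mul, star_star]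

lemma closure_span_apply_subset_of_dense {𝕜 E F : Type*} [NontriviallyNormedField 𝕜]
    [SeminormedAddCommGroup E] [NormedSpace 𝕜 E] [SeminormedAddCommGroup F] [NormedSpace 𝕜 F]
    {A : Set (E →L[𝕜] F)} {K : Set E} (hK : Dense K) :
    closure (Submodule.span 𝕜 {x | ∃ a ∈ A, ∃ h : E, a h = x} : Set F) ⊆
      closure (Submodule.span 𝕜 {x | ∃ a ∈ A, ∃ h ∈ K, a h = x} : Set F) := by
  simp only [← Submodule.topologicalClosure_coe]
  refine Submodule.topologicalClosure_minimal _ (Submodule.span_le.mpr ?_)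
    (Submodule.isClosed_topologicalClosure _)
  rintro _ ⟨a, ha, h, rfl⟩
  have hah : a h ∈ closure (a '' K) :=
    image_closure_subset_closure_image a.continuous ⟨h, hK h, rfl⟩
  rw [Submodule.topologicalClosure_coe]
  refine closure_mono ?_ hah
  rintro _ ⟨k, hk, rfl⟩
  exact Submodule.subset_span ⟨a, ha, k, hk, rfl⟩

namespace ContinuousLinearMap

variable {H : Type*} [NormedAddCommGroup H] [InnerProductSpace ℂ H] [CompleteSpace H]

lemma comp_eq_self_of_range_adjoint_subset {p a : H →L[ℂ] H} (hp : IsSelfAdjoint p)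
    (hpp : p ∘L p = p) (ha : Set.range (adjoint a) ⊆ Set.range p) : a ∘L p = a := by
  have hpa : p ∘L adjoint a = adjoint a := by
    ext x
    obtain ⟨y, hy⟩ := ha ⟨x, rfl⟩
    rw [comp_apply, ← hy, ← comp_apply, hpp]
  simpa [adjoint_comp, hp.adjoint_eq] using congrArg adjoint hpa

end ContinuousLinearMap

section ApproximateUnit

variable {H : Type*} [NormedAddCommGroup H] [InnerProductSpace ℂ H] [CompleteSpace H]
  {A : NonUnitalSubalgebra ℂ (H →L[ℂ] H)} {p : H →L[ℂ] H}

lemma apply_proj_eq_of_mem (hAstar : ∀ a ∈ A, ContinuousLinearMap.adjoint a ∈ A)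
    (hp : IsSelfAdjoint p) (hpp : p ∘L p = p)
    (hrange : Set.range p =
      closure ((Submodule.span ℂ {x : H | ∃ a ∈ A, ∃ h : H, a h = x} : Submodule ℂ H) : Set H))
    {a : H →L[ℂ] H} (ha : a ∈ A) (x : H) : a (p x) = a x := by
  have hap : a ∘L p = a := ContinuousLinearMap.comp_eq_self_of_range_adjoint_subset hp hpp <| by
    rintro _ ⟨h, rfl⟩
    exact hrange ▸ subset_closure (Submodule.subset_span ⟨_, hAstar a ha, h, rfl⟩)
  exact DFunLike.congr_fun hap x

lemma tendsto_proj_of_tendsto_mul_sub (hAstar : ∀ a ∈ A, ContinuousLinearMap.adjoint a ∈ A)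
    (hp : IsSelfAdjoint p) (hpp : p ∘L p = p)
    (hrange : Set.range p =
      closure ((Submodule.span ℂ {x : H | ∃ a ∈ A, ∃ h : H, a h = x} : Submodule ℂ H) : Set H))
    {v : ℕ → H →L[ℂ] H} (hv : ∀ n, v n ∈ A) {C : ℝ} (hvC : ∀ n, ‖v n‖ ≤ C)
    (hva : ∀ a ∈ A, Tendsto (fun n => ‖v n * a - a‖) atTop (𝓝 0)) (x : H) :
    Tendsto (fun n => v n x) atTop (𝓝 (p x)) := by
  have hgen : ∀ y ∈ {x : H | ∃ a ∈ A, ∃ h : H, a h = x},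
      Tendsto (fun n => v n y) atTop (𝓝 (ContinuousLinearMap.id ℂ H y)) := by
    rintro _ ⟨a, ha, h, rfl⟩
    rw [tendsto_iff_norm_sub_tendsto_zero]
    refine squeeze_zero (fun n => norm_nonneg _) (fun n => (v n * a - a).le_opNorm h) ?_
    simpa using (hva a ha).mul_const ‖h‖
  have hpx : Tendsto (fun n => v n (p x)) atTop (𝓝 (p x)) :=
    ContinuousLinearMap.tendsto_of_mem_closure_span
      (fun n => (v n).le_of_opNorm_le (hvC n)) _ hgen (hrange ▸ ⟨x, rfl⟩)
  simpa only [apply_proj_eq_of_mem hAstar hp hpp hrange (hv _)] using hpx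

end ApproximateUnit

section Commutator

variable {H : Type*} [NormedAddCommGroup H] [InnerProductSpace ℂ H] [CompleteSpace H]
  {D : H →ₗ.[ℂ] H}

noncomputable def adjCommutator (D : H →ₗ.[ℂ] H) (a : H →L[ℂ] H) (h : D.adjoint.domain) : H :=
  pApply D (a h) - a (D.adjoint h)

lemma adjCommutator_apply_mem_domain (hsym : D ≤ D.adjoint) {u a : H →L[ℂ] H}
    (h : D.adjoint.domain) (hah : a h ∈ D.domain) (huah : u (a h) ∈ D.domain) :
    adjCommutator D u ⟨a h, hsym.1 hah⟩ =
      adjCommutator D (u * a - a) h + (adjCommutator D a h - u (adjCommutator D a h)) := by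
  have hDah : D.adjoint ⟨a h, hsym.1 hah⟩ = pApply D (a h) := by
    rw [← pApply_coe, pApply_of_le hsym hah]
  simp only [adjCommutator, hDah, sub_apply, mul_apply_eq_comp, pApply_sub D huah hah, map_sub]
  abel

lemma tendsto_adjCommutator_apply (hsym : D ≤ D.adjoint) {u : ℕ → H →L[ℂ] H} {p : H →L[ℂ] H}
    (hu : ∀ x, Tendsto (fun n => u n x) atTop (𝓝 (p x))) {a : H →L[ℂ] H} (h : D.adjoint.domain)
    (hah : a h ∈ D.domain) (huah : ∀ n, u n (a h) ∈ D.domain)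
    (hsmall : Tendsto (fun n => adjCommutator D (u n * a - a) h) atTop (𝓝 0)) :
    Tendsto (fun n => adjCommutator D (u n) ⟨a h, hsym.1 hah⟩) atTop
      (𝓝 (adjCommutator D a h - p (adjCommutator D a h))) := by
  simp only [adjCommutator_apply_mem_domain hsym h hah (huah _)]
  simpa using hsmall.add (tendsto_const_nhds.sub (hu _))

lemma tendsto_proj_comp_adjCommutator_comp_proj (hdense : Dense (D.adjoint.domain : Set H))
    (hsym : D ≤ D.adjoint) {A : NonUnitalSubalgebra ℂ (H →L[ℂ] H)}
    (hmap : ∀ a ∈ A, ∀ h ∈ D.adjoint.domain, a h ∈ D.domain)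
    {p : H →L[ℂ] H} (hpp : p ∘L p = p)
    (hrange : Set.range p =
      closure ((Submodule.span ℂ {x : H | ∃ a ∈ A, ∃ h : H, a h = x} : Submodule ℂ H) : Set H))
    {u : ℕ → H →L[ℂ] H} (hu : ∀ n, u n ∈ A) (hup : ∀ x, Tendsto (fun n => u n x) atTop (𝓝 (p x)))
    {C : ℝ} (huC : ∀ n (h : D.adjoint.domain), ‖adjCommutator D (u n) h‖ ≤ C * ‖(h : H)‖)
    (hε : ∀ a ∈ A, ∃ ε : ℕ → ℝ, Tendsto ε atTop (𝓝 0) ∧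
      ∀ n (h : D.adjoint.domain), ‖adjCommutator D (u n * a - a) h‖ ≤ ε n * ‖(h : H)‖)
    {T : ℕ → H →L[ℂ] H} (hT : ∀ n (h : D.adjoint.domain), T n h = adjCommutator D (u n) h)
    (x : H) :
    Tendsto (fun n => p (T n (p x))) atTop (𝓝 0) := by
  have hTC : ∀ n y, ‖T n y‖ ≤ C * ‖y‖ := fun n =>
    (T n).norm_apply_le_of_dense hdense fun y hy => hT n ⟨y, hy⟩ ▸ huC n ⟨y, hy⟩
  have hgen : ∀ y ∈ {x | ∃ a ∈ A, ∃ h ∈ (D.adjoint.domain : Set H), a h = x},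
      Tendsto (fun n => (p ∘L T n) y) atTop (𝓝 ((0 : H →L[ℂ] H) y)) := by
    rintro _ ⟨a, ha, h, hh, rfl⟩
    have hah := hmap a ha h hh
    obtain ⟨ε, hε0, hεh⟩ := hε a ha
    have hsmall : Tendsto (fun n => adjCommutator D (u n * a - a) ⟨h, hh⟩) atTop (𝓝 0) :=
      squeeze_zero_norm (fun n => hεh n ⟨h, hh⟩) (by simpa using hε0.mul_const ‖h‖)
    have hlim := (p.continuous.tendsto _).comp <| tendsto_adjCommutator_apply hsym hup ⟨h, hh⟩
      hah (fun n => hmap _ (hu n) _ (hsym.1 hah)) hsmall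
    have hpp' : ∀ y, p (p y) = p y := DFunLike.congr_fun hpp
    have hTah : ∀ n, T n (a h) = adjCommutator D (u n) ⟨a h, hsym.1 hah⟩ := fun n => hT n ⟨a h, _⟩
    simpa [Function.comp_def, hTah, hpp'] using hlim
  refine ContinuousLinearMap.tendsto_of_mem_closure_span (C := ‖p‖ * C) (fun n y => ?_) 0 hgen
    (closure_span_apply_subset_of_dense (A := (A : Set (H →L[ℂ] H))) hdense (hrange ▸ ⟨x, rfl⟩))
  calc ‖p (T n y)‖ ≤ ‖p‖ * ‖T n y‖ := p.le_opNorm _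
    _ ≤ ‖p‖ * (C * ‖y‖) := by gcongr; exact hTC n y
    _ = ‖p‖ * C * ‖y‖ := by ring

end Commutator

theorem statement4_general
    {H : Type*} [NormedAddCommGroup H] [InnerProductSpace ℂ H] [CompleteSpace H]
    -- D closed, symmetric, densely defined
    (D : H →ₗ.[ℂ] H) (hdense : Dense (D.domain : Set H))
    (hclosed : D.IsClosed) (hsym : D ≤ D.adjoint)
    -- the *-closed subalgebra 𝒜 of B(H)
    (A : NonUnitalSubalgebra ℂ (H →L[ℂ] H))
    (hAstar : ∀ a ∈ A, ContinuousLinearMap.adjoint a ∈ A)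
    -- each a ∈ 𝒜 maps Dom D* into Dom D, with bounded commutator [D*,a] = Da − aD*
    (hmap : ∀ a ∈ A, ∀ h ∈ D.adjoint.domain, a h ∈ D.domain)
    -- the sequence (u_n) in 𝒜, uniformly bounded together with its commutators
    (u : ℕ → H →L[ℂ] H) (hu : ∀ n, u n ∈ A)
    (C : ℝ)
    (huC : ∀ n, ‖u n‖ ≤ C ∧ ∀ h : D.adjoint.domain,
      ‖pApply D (u n (h : H)) - u n (D.adjoint h)‖ ≤ C * ‖(h : H)‖)
    -- approximate unit conditions
    (hau_left : ∀ a ∈ A, Tendsto (fun n => ‖u n * a - a‖) atTop (𝓝 0))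
    (hau_right : ∀ a ∈ A, Tendsto (fun n => ‖a * u n - a‖) atTop (𝓝 0))
    (hau_comm_left : ∀ a ∈ A, ∃ ε : ℕ → ℝ, Tendsto ε atTop (𝓝 0) ∧
      ∀ n, ∀ h : D.adjoint.domain,
        ‖pApply D ((u n * a - a) (h : H)) - (u n * a - a) (D.adjoint h)‖ ≤ ε n * ‖(h : H)‖) :
    -- p : the orthogonal projection onto the closed linear span of {a h : a ∈ 𝒜, h ∈ H}
    ∀ p : H →L[ℂ] H,
      IsSelfAdjoint p → p ∘L p = p →
      Set.range p =
        closure ((Submodule.span ℂ {x : H | ∃ a ∈ A, ∃ h : H, a h = x} : Submodule ℂ H) : Set H) →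
      -- (1) u_n → p and u_n* → p in the strong operator topology
      ((∀ x : H, Tendsto (fun n => u n x) atTop (𝓝 (p x))) ∧
       (∀ x : H, Tendsto (fun n => ContinuousLinearMap.adjoint (u n) x) atTop (𝓝 (p x)))) ∧
      -- (2) p [D*,u_n] p → 0 in the strong operator topology (via the bounded extensions)
      (∀ T : ℕ → H →L[ℂ] H,
        (∀ n, ∀ h : D.adjoint.domain,
          T n (h : H) = pApply D (u n (h : H)) - u n (D.adjoint h)) →
        ∀ x : H, Tendsto (fun n => p (T n (p x))) atTop (𝓝 0)) ∧
      -- (3)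
      ((∀ e : D.adjoint.domain, ∃ y : H, Tendsto (fun n => pApply D (u n (e : H))) atTop (𝓝 y)) →
        (∀ e : D.adjoint.domain, p (e : H) ∈ D.domain) ∧
        (∃ M : ℝ, ∀ e : D.adjoint.domain,
          ‖pApply D (p (e : H)) - p (D.adjoint e)‖ ≤ M * ‖(e : H)‖) ∧
        (∀ e : D.adjoint.domain,
          Tendsto (fun n => pApply D (u n (e : H)) - u n (D.adjoint e)) atTop
            (𝓝 (pApply D (p (e : H)) - p (D.adjoint e))))) := by
  intro p hp hpp hrange
  have hup := tendsto_proj_of_tendsto_mul_sub hAstar hp hpp hrange hu (fun n => (huC n).1) hau_left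
  have hustar : ∀ x, Tendsto (fun n => ContinuousLinearMap.adjoint (u n) x) atTop (𝓝 (p x)) :=
    tendsto_proj_of_tendsto_mul_sub hAstar hp hpp hrange (fun n => hAstar _ (hu n))
      (fun n => (LinearIsometryEquiv.norm_map _ _).trans_le (huC n).1) fun a ha => by
        simpa only [← ContinuousLinearMap.star_eq_adjoint, norm_star_mul_sub_eq] using
          hau_right _ (hAstar a ha)
  refine ⟨⟨hup, hustar⟩, fun T hT => tendsto_proj_comp_adjCommutator_comp_proj
    (hdense.mono hsym.1) hsym hmap hpp hrange hu hup (fun n => (huC n).2) hau_comm_left hT,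
    fun hconv => ?_⟩
  choose y hy using hconv
  have hDp : ∀ e : D.adjoint.domain, p e ∈ D.domain ∧ pApply D (p e) = y e := fun e =>
    hclosed.pApply_eq_of_tendsto (fun n => hmap _ (hu n) e e.2) (hup e) (hy e)
  have hlim : ∀ e : D.adjoint.domain, Tendsto (fun n => adjCommutator D (u n) e) atTop
      (𝓝 (pApply D (p e) - p (D.adjoint e))) := fun e =>
    (hDp e).2 ▸ (hy e).sub (hup _)
  exact ⟨fun e => (hDp e).1, ⟨C, fun e => le_of_tendsto' (hlim e).norm fun n => (huC n).2 e⟩, hlim⟩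

/-- Let `D` be a closed symmetric densely defined operator on a complex
Hilbert space `H`, and `𝒜 ⊆ B(H)` a subalgebra closed under adjoints such that every
`a ∈ 𝒜` maps `Dom D*` into `Dom D` and the commutator `[D*,a] := Da − aD*` is bounded on
`Dom D*`.  Let `p` be the orthogonal projection onto the closed linear span of
`{ah : a ∈ 𝒜, h ∈ H}`.  If `(u_n)` is a sequence in `𝒜`, uniformly bounded together with
its commutators, which is an approximate unit for `𝒜` in the Lipschitz sense, then:
(1) `u_n → p` and `u_n* → p` strongly; (2) `p[D*,u_n]p → 0` strongly;
(3) if moreover `(D u_n e)` converges for every `e ∈ Dom D*`, then `p` maps `Dom D*`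
into `Dom D`, `Dp − pD*` is bounded on `Dom D*`, and `[D*,u_n]e → (Dp − pD*)e` for all
`e ∈ Dom D*`. -/
theorem statement4
    {H : Type*} [NormedAddCommGroup H] [InnerProductSpace ℂ H] [CompleteSpace H]
    -- D closed, symmetric, densely defined
    (D : H →ₗ.[ℂ] H) (hdense : Dense (D.domain : Set H))
    (hclosed : D.IsClosed) (hsym : D ≤ D.adjoint)
    -- the *-closed subalgebra 𝒜 of B(H)
    (A : NonUnitalSubalgebra ℂ (H →L[ℂ] H))
    (hAstar : ∀ a ∈ A, ContinuousLinearMap.adjoint a ∈ A)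
    -- each a ∈ 𝒜 maps Dom D* into Dom D, with bounded commutator [D*,a] = Da − aD*
    (hmap : ∀ a ∈ A, ∀ h ∈ D.adjoint.domain, a h ∈ D.domain)
    (hbddcomm : ∀ a ∈ A, ∃ M : ℝ, ∀ h : D.adjoint.domain,
      ‖pApply D (a h) - a (D.adjoint h)‖ ≤ M * ‖(h : H)‖)
    -- the sequence (u_n) in 𝒜, uniformly bounded together with its commutators
    (u : ℕ → H →L[ℂ] H) (hu : ∀ n, u n ∈ A)
    (C : ℝ)
    (huC : ∀ n, ‖u n‖ ≤ C ∧ ∀ h : D.adjoint.domain,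
      ‖pApply D (u n (h : H)) - u n (D.adjoint h)‖ ≤ C * ‖(h : H)‖)
    -- approximate unit conditions
    (hau_left : ∀ a ∈ A, Tendsto (fun n => ‖u n * a - a‖) atTop (𝓝 0))
    (hau_right : ∀ a ∈ A, Tendsto (fun n => ‖a * u n - a‖) atTop (𝓝 0))
    (hau_comm_left : ∀ a ∈ A, ∃ ε : ℕ → ℝ, Tendsto ε atTop (𝓝 0) ∧
      ∀ n, ∀ h : D.adjoint.domain,
        ‖pApply D ((u n * a - a) (h : H)) - (u n * a - a) (D.adjoint h)‖ ≤ ε n * ‖(h : H)‖)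
    (hau_comm_right : ∀ a ∈ A, ∃ ε : ℕ → ℝ, Tendsto ε atTop (𝓝 0) ∧
      ∀ n, ∀ h : D.adjoint.domain,
        ‖pApply D ((a * u n - a) (h : H)) - (a * u n - a) (D.adjoint h)‖ ≤ ε n * ‖(h : H)‖) :
    -- p : the orthogonal projection onto the closed linear span of {a h : a ∈ 𝒜, h ∈ H}
    ∀ p : H →L[ℂ] H,
      IsSelfAdjoint p → p ∘L p = p →
      Set.range p =
        closure ((Submodule.span ℂ {x : H | ∃ a ∈ A, ∃ h : H, a h = x} : Submodule ℂ H) : Set H) →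
      -- (1) u_n → p and u_n* → p in the strong operator topology
      ((∀ x : H, Tendsto (fun n => u n x) atTop (𝓝 (p x))) ∧
       (∀ x : H, Tendsto (fun n => ContinuousLinearMap.adjoint (u n) x) atTop (𝓝 (p x)))) ∧
      -- (2) p [D*,u_n] p → 0 in the strong operator topology (via the bounded extensions)
      (∀ T : ℕ → H →L[ℂ] H,
        (∀ n, ∀ h : D.adjoint.domain,
          T n (h : H) = pApply D (u n (h : H)) - u n (D.adjoint h)) →
        ∀ x : H, Tendsto (fun n => p (T n (p x))) atTop (𝓝 0)) ∧
      -- (3)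
      ((∀ e : D.adjoint.domain, ∃ y : H, Tendsto (fun n => pApply D (u n (e : H))) atTop (𝓝 y)) →
        (∀ e : D.adjoint.domain, p (e : H) ∈ D.domain) ∧
        (∃ M : ℝ, ∀ e : D.adjoint.domain,
          ‖pApply D (p (e : H)) - p (D.adjoint e)‖ ≤ M * ‖(e : H)‖) ∧
        (∀ e : D.adjoint.domain,
          Tendsto (fun n => pApply D (u n (e : H)) - u n (D.adjoint e)) atTop
            (𝓝 (pApply D (p (e : H)) - p (D.adjoint e))))) :=
  statement4_general D hdense hclosed hsym A hAstar hmap u hu C huC hau_left hau_right hau_comm_left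
end

section
/- Let (X,d) be a metric space. Suppose there exists a sequence (u_k) of real-valued Lipschitz functions on X, each vanishing at infinity, such that u_k(x) → 1 for every x ∈ X and sup_k Lip(u_k) < ∞. Then the metric space (X,d) is complete. -/
open Filter Topology

/-- Let `(X,d)` be a metric space.  Suppose there exists a sequence
`(u_k)` of real-valued Lipschitz functions on `X`, each vanishing at infinity, such that
`u_k(x) → 1` for every `x ∈ X` and `sup_k Lip(u_k) < ∞`.  Then `(X,d)` is complete. -/
theorem statement6 {X : Type*} [MetricSpace X]
    (u : ℕ → X → ℝ)
    -- uniformly Lipschitz : each u_k Lipschitz with sup of the constants finite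
    (hLip : ∃ C : NNReal, ∀ k, LipschitzWith C (u k))
    -- each u_k vanishes at infinity
    (hvanish : ∀ k, ∀ ε > (0 : ℝ), ∃ K : Set X, IsCompact K ∧ ∀ x ∉ K, |u k x| < ε)
    -- pointwise convergence to 1
    (hpt : ∀ x : X, Tendsto (fun k => u k x) atTop (𝓝 1)) :
    CompleteSpace X := by
  apply Metric.complete_of_cauchySeq_tendsto
  intro x hx
  obtain ⟨C, hC⟩ := hLip
  set r : ℝ := 1 / (2 * (C + 1)) with hr
  have hrpos : 0 < r := by positivity
  obtain ⟨N, hN⟩ := Metric.cauchySeq_iff'.mp hx r hrpos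
  -- pick k with u k (x N) > 3/4
  have h34 : ∀ᶠ k in atTop, u k (x N) > 3/4 :=
    (hpt (x N)).eventually (eventually_gt_nhds (by norm_num))
  obtain ⟨k, hk⟩ := h34.exists
  obtain ⟨K, hKc, hK⟩ := hvanish k (1/4) (by norm_num)
  have hmem : ∀ n ≥ N, x n ∈ K := by
    intro n hn
    by_contra hnot
    have habs := hK (x n) hnot
    have hlip := (hC k).dist_le_mul (x n) (x N)
    have hd : dist (x n) (x N) < r := hN n hn
    have hCr : (C : ℝ) * r ≤ 1/2 := by
      have h0 : (0:ℝ) ≤ C := C.coe_nonneg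
      rw [hr, mul_one_div, div_le_div_iff₀ (by positivity) (by norm_num)]
      nlinarith
    have : |u k (x n) - u k (x N)| ≤ C * r := by
      calc |u k (x n) - u k (x N)| = dist (u k (x n)) (u k (x N)) := by
            rw [Real.dist_eq]
        _ ≤ C * dist (x n) (x N) := hlip
        _ ≤ C * r := by
            exact mul_le_mul_of_nonneg_left hd.le C.coe_nonneg
    have h1 : u k (x n) ≥ u k (x N) - 1/2 := by
      have := abs_sub_abs_le_abs_sub (u k (x n)) (u k (x N))
      have h2 := neg_abs_le (u k (x n) - u k (x N))
      linarith [this, (abs_le.mp (le_trans ‹|u k (x n) - u k (x N)| ≤ C * r› hCr)).1]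
    have : u k (x n) > 1/4 := by linarith
    have := abs_lt.mp habs
    linarith
  -- the shifted sequence lies in K
  have hmem' : ∀ n, x (N + n) ∈ K := fun n => hmem _ (Nat.le_add_right N n)
  obtain ⟨a, _, φ, hφ, hlim⟩ := hKc.tendsto_subseq hmem'
  refine ⟨a, tendsto_nhds_of_cauchySeq_of_subseq hx
    ((strictMono_nat_of_lt_succ fun n => ?_).tendsto_atTop) hlim⟩
  exact Nat.add_lt_add_left (hφ (Nat.lt_succ_self n)) N
end

section
/- Let (u_n) be a sequence of continuously differentiable, compactly supported functions u_n : ℝ → ℝ such that ‖u_n g − g‖_∞ → 0 for every continuous function g : ℝ → ℝ vanishing at infinity, and such that ‖u_n'‖_∞ → 0. Let f(x) = sin(x³)/(1 + x²). Then f is a bounded Lipschitz function vanishing at infinity, but the Lipschitz seminorms of f − u_n·f do not tend to zero; equivalently, ‖(f − u_n f)'‖_∞ does not converge to 0. Hence (u_n) is not an approximate unit for the Lipschitz norm ‖·‖_∞ + Lip(·). -/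
/-!
Outside the compact support of `u n` the function `f - u n * f` coincides with `f`, so its
derivative there is `f'`. But `f'` does not vanish at infinity: at the points `x > 1` with
`x ^ 3 ∈ 2πℕ` it equals `3 x² / (1 + x²) > 1`. Hence `‖(f - u n f)'‖_∞ > 1` for every `n`.
-/

open Filter Topology

theorem exists_isCompact_abs_lt_of_tendsto_cocompact {X : Type*} [TopologicalSpace X]
    {g : X → ℝ} (hg : Tendsto g (cocompact X) (𝓝 0)) {ε : ℝ} (hε : 0 < ε) :
    ∃ K : Set X, IsCompact K ∧ ∀ x ∉ K, |g x| < ε := by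
  obtain ⟨K, hK, hKg⟩ := hasBasis_cocompact.tendsto_left_iff.1 hg _ (Metric.ball_mem_nhds 0 hε)
  exact ⟨K, hK, fun x hx => by simpa using hKg hx⟩

theorem tendsto_inv_one_add_sq_cocompact :
    Tendsto (fun x : ℝ => (1 + x ^ 2)⁻¹) (cocompact ℝ) (𝓝 0) := by
  have h : Tendsto (fun x : ℝ => 1 + ‖x‖ ^ 2) (cocompact ℝ) atTop :=
    tendsto_atTop_add_const_left _ 1 ((tendsto_pow_atTop two_ne_zero).comp
      tendsto_norm_cocompact_atTop)
  refine tendsto_inv_atTop_zero.comp (h.congr fun x => ?_)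
  rw [Real.norm_eq_abs, sq_abs]

theorem abs_two_mul_le_one_add_sq (x : ℝ) : |2 * x| ≤ 1 + x ^ 2 :=
  abs_le.2 ⟨by nlinarith [sq_nonneg (x + 1)], by nlinarith [sq_nonneg (x - 1)]⟩

theorem HasCompactSupport.eventually_deriv_sub_mul_self_eq {𝕜 : Type*}
    [NontriviallyNormedField 𝕜] {u : 𝕜 → 𝕜} (hu : HasCompactSupport u) (g : 𝕜 → 𝕜) :
    ∀ᶠ x in cocompact 𝕜, deriv (fun y => g y - u y * g y) x = deriv g x := by
  filter_upwards [hu.isCompact.compl_mem_cocompact] with x hx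
  refine EventuallyEq.deriv_eq ?_
  filter_upwards [notMem_tsupport_iff_eventuallyEq.1 hx] with y hy
  simp [hy]

theorem frequently_cos_pow_three_eq_one :
    ∃ᶠ x : ℝ in atTop, 1 < x ∧ Real.cos (x ^ 3) = 1 := by
  refine frequently_atTop.2 fun a => ?_
  obtain ⟨k, hk⟩ := exists_nat_gt (max a 1 ^ 3 / (2 * Real.pi))
  rw [div_lt_iff₀ (by positivity)] at hk
  have hk0 : (0 : ℝ) ≤ k * (2 * Real.pi) := by positivity
  set x : ℝ := (k * (2 * Real.pi)) ^ ((3 : ℕ) : ℝ)⁻¹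
  have hx3 : x ^ 3 = k * (2 * Real.pi) := Real.rpow_inv_natCast_pow hk0 three_ne_zero
  have hx : max a 1 < x :=
    lt_of_pow_lt_pow_left₀ 3 (Real.rpow_nonneg hk0 _) (hx3 ▸ hk)
  refine ⟨x, (le_max_left a 1).trans hx.le, (le_max_right a 1).trans_lt hx, ?_⟩
  rw [hx3]
  exact Real.cos_nat_mul_two_pi k

noncomputable def sinCubeDivOneAddSq (x : ℝ) : ℝ := Real.sin (x ^ 3) / (1 + x ^ 2)

theorem abs_sinCubeDivOneAddSq_le (x : ℝ) : |sinCubeDivOneAddSq x| ≤ (1 + x ^ 2)⁻¹ := by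
  rw [sinCubeDivOneAddSq, abs_div, abs_of_pos (show 0 < 1 + x ^ 2 by positivity),
    div_eq_mul_inv]
  exact mul_le_of_le_one_left (by positivity) (Real.abs_sin_le_one _)

theorem abs_sinCubeDivOneAddSq_le_one (x : ℝ) : |sinCubeDivOneAddSq x| ≤ 1 :=
  (abs_sinCubeDivOneAddSq_le x).trans (inv_le_one_of_one_le₀ (by nlinarith [sq_nonneg x]))

theorem tendsto_sinCubeDivOneAddSq_cocompact :
    Tendsto sinCubeDivOneAddSq (cocompact ℝ) (𝓝 0) :=
  squeeze_zero_norm abs_sinCubeDivOneAddSq_le tendsto_inv_one_add_sq_cocompact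

theorem hasDerivAt_sinCubeDivOneAddSq (x : ℝ) :
    HasDerivAt sinCubeDivOneAddSq
      (Real.cos (x ^ 3) * (3 * x ^ 2 / (1 + x ^ 2))
        - Real.sin (x ^ 3) * (2 * x / (1 + x ^ 2) ^ 2)) x := by
  have hsin : HasDerivAt (fun y : ℝ => Real.sin (y ^ 3)) (Real.cos (x ^ 3) * (3 * x ^ 2)) x := by
    simpa using (hasDerivAt_pow 3 x).sin
  have hden : HasDerivAt (fun y : ℝ => 1 + y ^ 2) (2 * x) x := by
    simpa using (hasDerivAt_pow 2 x).const_add 1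
  have hpos : 1 + x ^ 2 ≠ 0 := by positivity
  exact (hsin.div hden hpos).congr_deriv (by field_simp)

theorem abs_deriv_sinCubeDivOneAddSq_le (x : ℝ) : |deriv sinCubeDivOneAddSq x| ≤ 4 := by
  have hpos : 0 < 1 + x ^ 2 := by positivity
  have hfirst : |3 * x ^ 2 / (1 + x ^ 2)| ≤ 3 := by
    rw [abs_of_nonneg (by positivity), div_le_iff₀ hpos]
    linarith
  have hsecond : |2 * x / (1 + x ^ 2) ^ 2| ≤ 1 := by
    rw [abs_div, abs_of_pos (pow_pos hpos 2), div_le_one (pow_pos hpos 2)]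
    exact (abs_two_mul_le_one_add_sq x).trans (by nlinarith [sq_nonneg x])
  rw [(hasDerivAt_sinCubeDivOneAddSq x).deriv]
  calc _ ≤ |Real.cos (x ^ 3) * (3 * x ^ 2 / (1 + x ^ 2))|
          + |Real.sin (x ^ 3) * (2 * x / (1 + x ^ 2) ^ 2)| := abs_sub _ _
    _ ≤ 3 + 1 := by
        rw [abs_mul, abs_mul]
        gcongr
        · exact mul_le_of_le_one_left (abs_nonneg _) (Real.abs_cos_le_one _) |>.trans hfirst
        · exact mul_le_of_le_one_left (abs_nonneg _) (Real.abs_sin_le_one _) |>.trans hsecond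
    _ = 4 := by norm_num

theorem lipschitzWith_sinCubeDivOneAddSq : LipschitzWith 4 sinCubeDivOneAddSq := by
  refine lipschitzWith_of_nnnorm_deriv_le
    (fun x => (hasDerivAt_sinCubeDivOneAddSq x).differentiableAt) fun x => ?_
  rw [← NNReal.coe_le_coe, coe_nnnorm, Real.norm_eq_abs]
  exact abs_deriv_sinCubeDivOneAddSq_le x

theorem one_lt_deriv_sinCubeDivOneAddSq {x : ℝ} (hx : 1 < x) (hcos : Real.cos (x ^ 3) = 1) :
    1 < deriv sinCubeDivOneAddSq x := by
  have hsin : Real.sin (x ^ 3) = 0 := Real.sin_eq_zero_iff_cos_eq.2 (Or.inl hcos)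
  rw [(hasDerivAt_sinCubeDivOneAddSq x).deriv, hcos, hsin, one_mul, zero_mul, sub_zero,
    one_lt_div (by positivity)]
  nlinarith

theorem frequently_one_lt_deriv_sinCubeDivOneAddSq :
    ∃ᶠ x in cocompact ℝ, 1 < deriv sinCubeDivOneAddSq x :=
  (frequently_cos_pow_three_eq_one.mono fun _ hx =>
    one_lt_deriv_sinCubeDivOneAddSq hx.1 hx.2).filter_mono atTop_le_cocompact

theorem statement8_general
    (u : ℕ → ℝ → ℝ)
    (hsupp : ∀ n, HasCompactSupport (u n)) :
    -- f is bounded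
    (∃ M : ℝ, ∀ x : ℝ, |Real.sin (x ^ 3) / (1 + x ^ 2)| ≤ M) ∧
    -- f is Lipschitz
    (∃ K : NNReal, LipschitzWith K fun x : ℝ => Real.sin (x ^ 3) / (1 + x ^ 2)) ∧
    -- f vanishes at infinity
    (∀ ε > (0 : ℝ), ∃ K : Set ℝ, IsCompact K ∧
      ∀ x ∉ K, |Real.sin (x ^ 3) / (1 + x ^ 2)| < ε) ∧
    -- but ‖(f − u_n f)'‖_∞ does not converge to 0
    ¬ (∀ ε > (0 : ℝ), ∃ N : ℕ, ∀ n ≥ N, ∀ x : ℝ,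
        |deriv (fun y : ℝ =>
          Real.sin (y ^ 3) / (1 + y ^ 2) - u n y * (Real.sin (y ^ 3) / (1 + y ^ 2))) x| ≤ ε) := by
  refine ⟨⟨1, abs_sinCubeDivOneAddSq_le_one⟩, ⟨4, lipschitzWith_sinCubeDivOneAddSq⟩,
    fun ε hε => exists_isCompact_abs_lt_of_tendsto_cocompact
      tendsto_sinCubeDivOneAddSq_cocompact hε, fun h => ?_⟩
  obtain ⟨N, hN⟩ := h 1 one_pos
  obtain ⟨x, hgt, hderiv⟩ := (frequently_one_lt_deriv_sinCubeDivOneAddSq.and_eventually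
    ((hsupp N).eventually_deriv_sub_mul_self_eq sinCubeDivOneAddSq)).exists
  have hle : |deriv (fun y => sinCubeDivOneAddSq y - u N y * sinCubeDivOneAddSq y) x| ≤ 1 :=
    hN N le_rfl x
  rw [hderiv] at hle
  linarith [le_abs_self (deriv sinCubeDivOneAddSq x)]

/-- Let `(u_n)` be continuously differentiable, compactly supported
functions `u_n : ℝ → ℝ` with `‖u_n g − g‖_∞ → 0` for every continuous function `g`
vanishing at infinity, and `‖u_n'‖_∞ → 0`.  Let `f(x) = sin(x³)/(1+x²)`.  Then `f` is a
bounded Lipschitz function vanishing at infinity, but `‖(f − u_n f)'‖_∞` does not tend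
to `0`; hence `(u_n)` is not an approximate unit for the Lipschitz norm. -/
theorem statement8
    (u : ℕ → ℝ → ℝ)
    (hsmooth : ∀ n, ContDiff ℝ 1 (u n))
    (hsupp : ∀ n, HasCompactSupport (u n))
    -- sup-norm approximate unit on C₀(ℝ)
    (happrox : ∀ g : ℝ → ℝ, Continuous g →
      (∀ ε > (0 : ℝ), ∃ K : Set ℝ, IsCompact K ∧ ∀ x ∉ K, |g x| < ε) →
      ∀ ε > (0 : ℝ), ∃ N : ℕ, ∀ n ≥ N, ∀ x : ℝ, |u n x * g x - g x| ≤ ε)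
    -- derivatives tend to zero uniformly
    (hderiv : ∀ ε > (0 : ℝ), ∃ N : ℕ, ∀ n ≥ N, ∀ x : ℝ, |deriv (u n) x| ≤ ε) :
    -- f is bounded
    (∃ M : ℝ, ∀ x : ℝ, |Real.sin (x ^ 3) / (1 + x ^ 2)| ≤ M) ∧
    -- f is Lipschitz
    (∃ K : NNReal, LipschitzWith K fun x : ℝ => Real.sin (x ^ 3) / (1 + x ^ 2)) ∧
    -- f vanishes at infinity
    (∀ ε > (0 : ℝ), ∃ K : Set ℝ, IsCompact K ∧
      ∀ x ∉ K, |Real.sin (x ^ 3) / (1 + x ^ 2)| < ε) ∧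
    -- but ‖(f − u_n f)'‖_∞ does not converge to 0
    ¬ (∀ ε > (0 : ℝ), ∃ N : ℕ, ∀ n ≥ N, ∀ x : ℝ,
        |deriv (fun y : ℝ =>
          Real.sin (y ^ 3) / (1 + y ^ 2) - u n y * (Real.sin (y ^ 3) / (1 + y ^ 2))) x| ≤ ε) :=
  statement8_general u hsupp
end

section
/- Let A be a (not necessarily unital) C*-algebra, 𝒜 ⊆ A a dense *-subalgebra, and L : 𝒜 → [0,∞) a seminorm. Define an extended metric on the set S(A) of states of A by d(σ,τ) := sup{|σ(a) − τ(a)| : a ∈ 𝒜, L(a) ≤ 1} ∈ [0,∞]. Suppose A admits a (contractive, increasing) approximate unit (u_n) contained in 𝒜 with sup_n L(u_n) < ∞. Then (S(A), d) is complete: if (σ_k) is a sequence of states with d(σ_k,σ_l) → 0 as k,l → ∞, then there exists a state σ of A with d(σ_k,σ) → 0. -/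
set_option synthInstance.maxHeartbeats 1000000
set_option maxHeartbeats 1000000

open Filter Topology
open scoped ComplexOrder ENNReal

def IsState {A : Type*} [NonUnitalCStarAlgebra A] (σ : A →L[ℂ] ℂ) : Prop :=
  ‖σ‖ = 1 ∧ ∀ a : A, 0 ≤ σ (star a * a)

noncomputable def stateDist {A : Type*} [NonUnitalCStarAlgebra A]
    (S : NonUnitalSubalgebra ℂ A) (L : S → ℝ) (σ τ : A →L[ℂ] ℂ) : ℝ≥0∞ :=
  ⨆ a : {a : S // L a ≤ 1}, ENNReal.ofReal ‖σ ((a : S) : A) - τ ((a : S) : A)‖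

/-!
Because `L (c • b) = ‖c‖ * L b`, a `d`-Cauchy sequence of states `σ k` is Cauchy at every point
of `𝒜`, hence, the states being contractions and `𝒜` dense, at every point of `A`. Its pointwise
limit `τ` is positive with `‖τ‖ ≤ 1`, and `d` is lower semicontinuous under pointwise limits,
so `d (σ k, τ) → 0`. No mass escapes: by Cauchy–Schwarz, `|σ (v a)|² ≤ σ v · σ (a⋆ v a)` for
`0 ≤ v`, so a positive functional satisfies `‖σ‖ ≤ supₙ |σ (uₙ)|`; since `L (uₙ)` is bounded,
`σ k (uₙ)` is close to `τ (uₙ)` uniformly in `n`, which forces `‖τ‖ ≥ 1`.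
-/

section StateDist

variable {A : Type*} [NonUnitalCStarAlgebra A] {S : NonUnitalSubalgebra ℂ A} {L : S → ℝ}

lemma ofReal_norm_sub_le_stateDist (φ ψ : A →L[ℂ] ℂ) {b : S} (hb : L b ≤ 1) :
    ENNReal.ofReal ‖φ b - ψ b‖ ≤ stateDist S L φ ψ :=
  le_iSup_of_le (⟨b, hb⟩ : {a : S // L a ≤ 1}) le_rfl

lemma ofReal_norm_sub_le_mul_stateDist (hLsmul : ∀ (c : ℂ) (a : S), L (c • a) = ‖c‖ * L a)
    (φ ψ : A →L[ℂ] ℂ) {b : S} {c : ℝ} (hc : 0 < c) (hb : L b ≤ c) :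
    ENNReal.ofReal ‖φ b - ψ b‖ ≤ ENNReal.ofReal c * stateDist S L φ ψ := by
  have hb' : L ((c⁻¹ : ℂ) • b) ≤ 1 := by
    rw [hLsmul, norm_inv, Complex.norm_real, Real.norm_of_nonneg hc.le, inv_mul_le_iff₀ hc, mul_one]
    exact hb
  have hφψ : φ b - ψ b = c * (φ ((c⁻¹ : ℂ) • b : S) - ψ ((c⁻¹ : ℂ) • b : S)) := by
    have hc' : (c : ℂ) ≠ 0 := Complex.ofReal_ne_zero.mpr hc.ne'
    simp only [NonUnitalSubalgebra.coe_smul, map_smul, smul_eq_mul]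
    field_simp
  rw [hφψ, norm_mul, Complex.norm_real, Real.norm_of_nonneg hc.le, ENNReal.ofReal_mul hc.le]
  gcongr
  exact ofReal_norm_sub_le_stateDist φ ψ hb'

lemma cauchySeq_apply_of_stateDist (hLsmul : ∀ (c : ℂ) (a : S), L (c • a) = ‖c‖ * L a)
    {σ : ℕ → A →L[ℂ] ℂ}
    (hσ : ∀ ε : ℝ≥0∞, 0 < ε → ∃ N : ℕ, ∀ k ≥ N, ∀ l ≥ N, stateDist S L (σ k) (σ l) < ε)
    (b : S) : CauchySeq fun k => σ k b := by
  set c := max (L b) 1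
  have hc : 0 < c := lt_max_of_lt_right one_pos
  refine EMetric.cauchySeq_iff.mpr fun ε hε => ?_
  obtain ⟨N, hN⟩ := hσ (ε / ENNReal.ofReal c) (ENNReal.div_pos hε.ne' ENNReal.ofReal_ne_top)
  refine ⟨N, fun k hk l hl => ?_⟩
  calc edist (σ k b) (σ l b) ≤ ENNReal.ofReal c * stateDist S L (σ k) (σ l) := by
        rw [edist_dist, dist_eq_norm]
        exact ofReal_norm_sub_le_mul_stateDist hLsmul _ _ hc (le_max_left _ _)
    _ < ε := ENNReal.mul_lt_of_lt_div' (hN k hk l hl)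

lemma stateDist_le_of_tendsto {σ : ℕ → A →L[ℂ] ℂ} {φ τ : A →L[ℂ] ℂ}
    (hτ : ∀ a, Tendsto (fun l => σ l a) atTop (𝓝 (τ a))) {ε : ℝ≥0∞}
    (hε : ∀ᶠ l in atTop, stateDist S L φ (σ l) ≤ ε) : stateDist S L φ τ ≤ ε := by
  refine iSup_le fun b =>
    le_of_tendsto (ENNReal.tendsto_ofReal ((tendsto_const_nhds.sub (hτ b)).norm)) ?_
  filter_upwards [hε] with l hl
  exact (ofReal_norm_sub_le_stateDist φ (σ l) b.2).trans hl

lemma tendsto_stateDist_of_cauchy {σ : ℕ → A →L[ℂ] ℂ}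
    (hσ : ∀ ε : ℝ≥0∞, 0 < ε → ∃ N : ℕ, ∀ k ≥ N, ∀ l ≥ N, stateDist S L (σ k) (σ l) < ε)
    {τ : A →L[ℂ] ℂ} (hτ : ∀ a, Tendsto (fun l => σ l a) atTop (𝓝 (τ a))) :
    Tendsto (fun k => stateDist S L (σ k) τ) atTop (𝓝 0) := by
  refine ENNReal.tendsto_nhds_zero.mpr fun ε hε => ?_
  obtain ⟨N, hN⟩ := hσ ε hε
  filter_upwards [eventually_ge_atTop N] with k hk
  exact stateDist_le_of_tendsto hτ <|
    (eventually_ge_atTop N).mono fun l hl => (hN k hk l hl).le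

end StateDist

lemma cauchySeq_apply_of_dense {𝕜 E F : Type*} [NontriviallyNormedField 𝕜]
    [SeminormedAddCommGroup E] [NormedSpace 𝕜 E] [SeminormedAddCommGroup F] [NormedSpace 𝕜 F]
    {σ : ℕ → E →L[𝕜] F} {C : ℝ} (hC : ∀ k, ‖σ k‖ ≤ C) {s : Set E} (hs : Dense s)
    (hσ : ∀ b ∈ s, CauchySeq fun k => σ k b) (a : E) : CauchySeq fun k => σ k a := by
  have hC0 : 0 ≤ C := (norm_nonneg _).trans (hC 0)
  refine Metric.cauchySeq_iff.mpr fun ε hε => ?_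
  obtain ⟨b, hbs, hab⟩ := hs.exists_dist_lt a (show 0 < ε / (3 * (C + 1)) by positivity)
  obtain ⟨N, hN⟩ := Metric.cauchySeq_iff.mp (hσ b hbs) (ε / 3) (by positivity)
  have hclose : ∀ k, dist (σ k a) (σ k b) < ε / 3 := fun k => by
    calc dist (σ k a) (σ k b) ≤ C * dist a b := by
          simpa only [dist_eq_norm, ← map_sub] using (σ k).le_of_opNorm_le (hC k) (a - b)
      _ ≤ (C + 1) * dist a b := by gcongr; linarith
      _ < (C + 1) * (ε / (3 * (C + 1))) := by gcongr
      _ = ε / 3 := by field_simp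
  refine ⟨N, fun k hk l hl => ?_⟩
  calc dist (σ k a) (σ l a) ≤ dist (σ k a) (σ k b) + dist (σ k b) (σ l b) + dist (σ l b) (σ l a) :=
        dist_triangle4 _ _ _ _
    _ < ε / 3 + ε / 3 + ε / 3 := by
        gcongr
        · exact hclose k
        · exact hN k hk l hl
        · rw [dist_comm]; exact hclose l
    _ = ε := by ring

section PositiveFunctional

variable {A : Type*} [NonUnitalCStarAlgebra A] [PartialOrder A] [StarOrderedRing A]
  {σ : A →L[ℂ] ℂ}

-- Cauchy–Schwarz for the GNS pre-inner product `⟪x, y⟫ = σ (star x * y)`.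
lemma norm_apply_star_mul_sq_le (hσ : ∀ a : A, 0 ≤ σ (star a * a)) (x y : A) :
    ‖σ (star x * y)‖ ^ 2 ≤ ‖σ (star x * x)‖ * ‖σ (star y * y)‖ := by
  let f : A →ₚ[ℂ] ℂ := .mk₀ σ.toLinearMap fun a ha => by
    obtain ⟨b, rfl⟩ := CStarAlgebra.nonneg_iff_eq_star_mul_self.mp ha
    exact hσ b
  have hnorm_sq (a : A) : ‖f.toPreGNS a‖ ^ 2 = ‖σ (star a * a)‖ := by
    have h := congrArg (‖·‖) (f.preGNS_norm_sq (f.toPreGNS a))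
    simp only [Complex.norm_pow, Complex.norm_real, norm_norm, f.ofPreGNS_toPreGNS] at h
    exact h
  have hcs := norm_inner_le_norm (𝕜 := ℂ) (f.toPreGNS x) (f.toPreGNS y)
  rw [f.preGNS_inner_def] at hcs
  calc ‖σ (star x * y)‖ ^ 2 ≤ (‖f.toPreGNS x‖ * ‖f.toPreGNS y‖) ^ 2 := by gcongr; exact hcs
    _ = ‖σ (star x * x)‖ * ‖σ (star y * y)‖ := by rw [mul_pow, hnorm_sq, hnorm_sq]

lemma norm_apply_mul_sq_le (hσ : ∀ a : A, 0 ≤ σ (star a * a)) {v : A} (hv : 0 ≤ v) (a : A) :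
    ‖σ (v * a)‖ ^ 2 ≤ ‖σ v‖ * (‖σ‖ * ‖v‖ * ‖a‖ ^ 2) := by
  set s := CFC.sqrt v
  have hss : star s * s = v := by
    rw [(CFC.sqrt_nonneg v).isSelfAdjoint.star_eq, CFC.sqrt_mul_sqrt_self v hv]
  have hsa : ‖star (s * a) * (s * a)‖ ≤ ‖v‖ * ‖a‖ ^ 2 := by
    rw [CStarRing.norm_star_mul_self, ← hss, CStarRing.norm_star_mul_self]
    nlinarith [norm_mul_le s a, norm_nonneg (s * a)]
  calc ‖σ (v * a)‖ ^ 2 = ‖σ (star s * (s * a))‖ ^ 2 := by rw [← mul_assoc, hss]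
    _ ≤ ‖σ (star s * s)‖ * ‖σ (star (s * a) * (s * a))‖ := norm_apply_star_mul_sq_le hσ _ _
    _ ≤ ‖σ v‖ * (‖σ‖ * ‖v‖ * ‖a‖ ^ 2) := by
        rw [hss, mul_assoc ‖σ‖]
        gcongr
        exact σ.le_opNorm_of_le hsa

lemma opNorm_le_of_forall_norm_apply_le (hσ : ∀ a : A, 0 ≤ σ (star a * a)) {u : ℕ → A}
    (hu_pos : ∀ n, 0 ≤ u n) (hu_contr : ∀ n, ‖u n‖ ≤ 1)
    (hu_approx : ∀ a : A, Tendsto (fun n => ‖u n * a - a‖) atTop (𝓝 0))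
    {M : ℝ} (hM : ∀ n, ‖σ (u n)‖ ≤ M) : ‖σ‖ ≤ M := by
  have hM0 : 0 ≤ M := (norm_nonneg _).trans (hM 0)
  have hsq (a : A) : ‖σ a‖ ^ 2 ≤ M * ‖σ‖ * ‖a‖ ^ 2 := by
    have hlim : Tendsto (fun n => σ (u n * a)) atTop (𝓝 (σ a)) :=
      (σ.continuous.tendsto a).comp (tendsto_iff_norm_sub_tendsto_zero.mpr (hu_approx a))
    refine le_of_tendsto (hlim.norm.pow 2) (Eventually.of_forall fun n => ?_)
    calc ‖σ (u n * a)‖ ^ 2 ≤ ‖σ (u n)‖ * (‖σ‖ * ‖u n‖ * ‖a‖ ^ 2) :=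
          norm_apply_mul_sq_le hσ (hu_pos n) a
      _ ≤ M * (‖σ‖ * 1 * ‖a‖ ^ 2) := by gcongr; exacts [hM n, hu_contr n]
      _ = M * ‖σ‖ * ‖a‖ ^ 2 := by ring
  have hle : ‖σ‖ ≤ √(M * ‖σ‖) := σ.opNorm_le_bound (Real.sqrt_nonneg _) fun a => by
    rw [← Real.sqrt_sq (norm_nonneg (σ a)), ← Real.sqrt_sq (norm_nonneg a),
      ← Real.sqrt_mul' _ (sq_nonneg _)]
    exact Real.sqrt_le_sqrt (hsq a)
  nlinarith [(Real.le_sqrt (norm_nonneg σ) (by positivity)).mp hle, norm_nonneg σ]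

lemma opNorm_le_add_of_forall_norm_sub_apply_le (hσ : ∀ a : A, 0 ≤ σ (star a * a))
    {u : ℕ → A} (hu_pos : ∀ n, 0 ≤ u n) (hu_contr : ∀ n, ‖u n‖ ≤ 1)
    (hu_approx : ∀ a : A, Tendsto (fun n => ‖u n * a - a‖) atTop (𝓝 0))
    {τ : A →L[ℂ] ℂ} {δ : ℝ} (hστ : ∀ n, ‖σ (u n) - τ (u n)‖ ≤ δ) : ‖σ‖ ≤ ‖τ‖ + δ :=
  opNorm_le_of_forall_norm_apply_le hσ hu_pos hu_contr hu_approx fun n =>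
    calc ‖σ (u n)‖ ≤ ‖τ (u n)‖ + ‖σ (u n) - τ (u n)‖ := norm_le_norm_add_norm_sub' _ _
      _ ≤ ‖τ‖ + δ := add_le_add (τ.unit_le_opNorm _ (hu_contr n)) (hστ n)

end PositiveFunctional

theorem statement10_general {A : Type*} [NonUnitalCStarAlgebra A]
    [PartialOrder A] [StarOrderedRing A]
    -- the dense *-subalgebra 𝒜
    (S : NonUnitalSubalgebra ℂ A)
    (hSdense : Dense (S : Set A))
    -- the seminorm L on 𝒜 with values in [0,∞)
    (L : S → ℝ)
    (hLsmul : ∀ (c : ℂ) (a : S), L (c • a) = ‖c‖ * L a)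
    -- the contractive increasing approximate unit contained in 𝒜
    (u : ℕ → S)
    (hu_pos : ∀ n, (0 : A) ≤ (u n : A))
    (hu_contr : ∀ n, ‖(u n : A)‖ ≤ 1)
    (hu_approx : ∀ a : A, Tendsto (fun n => ‖(u n : A) * a - a‖) atTop (𝓝 0))
    (huL : ∃ C : ℝ, ∀ n, L (u n) ≤ C) :
    ∀ σ : ℕ → A →L[ℂ] ℂ, (∀ k, IsState (σ k)) →
      (∀ ε : ℝ≥0∞, 0 < ε → ∃ N : ℕ, ∀ k ≥ N, ∀ l ≥ N, stateDist S L (σ k) (σ l) < ε) →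
      ∃ τ : A →L[ℂ] ℂ, IsState τ ∧ Tendsto (fun k => stateDist S L (σ k) τ) atTop (𝓝 0) := by
  intro σ hσ hcauchy
  have hσ_norm (k : ℕ) : ‖σ k‖ ≤ 1 := (hσ k).1.le
  choose f hf using fun a => cauchySeq_tendsto_of_complete <|
    cauchySeq_apply_of_dense hσ_norm hSdense
      (fun b hb => cauchySeq_apply_of_stateDist hLsmul hcauchy ⟨b, hb⟩) a
  let τ : A →L[ℂ] ℂ := .ofTendstoOfBoundedRange f σ (tendsto_pi_nhds.mpr hf)
    (isBounded_iff_forall_norm_le.mpr ⟨1, Set.forall_mem_range.mpr hσ_norm⟩)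
  have hτ : ∀ a, Tendsto (fun k => σ k a) atTop (𝓝 (τ a)) := hf
  have hdist := tendsto_stateDist_of_cauchy hcauchy hτ
  obtain ⟨C, hC⟩ := huL
  have hc : 0 < max C 1 := lt_max_of_lt_right one_pos
  have hτ_ge (ε : ℝ) (hε : 0 < ε) : 1 ≤ ‖τ‖ + max C 1 * ε := by
    obtain ⟨k, hk⟩ := (ENNReal.tendsto_nhds_zero.mp hdist (.ofReal ε) (by positivity)).exists
    refine (hσ k).1.ge.trans <| opNorm_le_add_of_forall_norm_sub_apply_le (hσ k).2 hu_pos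
      hu_contr hu_approx fun n => ?_
    rw [← ENNReal.ofReal_le_ofReal_iff (by positivity), ENNReal.ofReal_mul hc.le]
    exact (ofReal_norm_sub_le_mul_stateDist hLsmul _ _ hc
      ((hC n).trans (le_max_left _ _))).trans (by gcongr)
  refine ⟨τ, ⟨le_antisymm ?_ ?_, fun a => ge_of_tendsto' (hτ _) fun k => (hσ k).2 a⟩, hdist⟩
  · exact τ.opNorm_le_bound zero_le_one fun a =>
      le_of_tendsto' (hτ a).norm fun k => (σ k).le_of_opNorm_le (hσ_norm k) a
  · refine le_of_forall_pos_le_add fun ε hε => ?_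
    simpa [mul_div_cancel₀ _ hc.ne'] using hτ_ge (ε / max C 1) (div_pos hε hc)

/-- Let `A` be a C*-algebra, `𝒜 ⊆ A` a dense *-subalgebra and
`L : 𝒜 → [0,∞)` a seminorm.  Define the extended metric
`d(σ,τ) := sup {|σ(a) − τ(a)| : a ∈ 𝒜, L(a) ≤ 1}` on the states of `A`.  If `A` admits a
contractive increasing approximate unit `(u_n)` contained in `𝒜` with `sup_n L(u_n) < ∞`,
then `(S(A), d)` is complete: every `d`-Cauchy sequence of states `d`-converges to a
state. -/
theorem statement10 {A : Type*} [NonUnitalCStarAlgebra A]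
    [PartialOrder A] [StarOrderedRing A]
    -- the dense *-subalgebra 𝒜
    (S : NonUnitalSubalgebra ℂ A) (hSstar : ∀ a ∈ S, star a ∈ S)
    (hSdense : Dense (S : Set A))
    -- the seminorm L on 𝒜 with values in [0,∞)
    (L : S → ℝ) (hL0 : ∀ a : S, 0 ≤ L a)
    (hLsmul : ∀ (c : ℂ) (a : S), L (c • a) = ‖c‖ * L a)
    (hLadd : ∀ a b : S, L (a + b) ≤ L a + L b)
    -- the contractive increasing approximate unit contained in 𝒜
    (u : ℕ → S)
    (hu_pos : ∀ n, (0 : A) ≤ (u n : A))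
    (hu_contr : ∀ n, ‖(u n : A)‖ ≤ 1)
    (hu_incr : Monotone fun n => ((u n : S) : A))
    (hu_approx : ∀ a : A, Tendsto (fun n => ‖(u n : A) * a - a‖) atTop (𝓝 0))
    (huL : ∃ C : ℝ, ∀ n, L (u n) ≤ C) :
    ∀ σ : ℕ → A →L[ℂ] ℂ, (∀ k, IsState (σ k)) →
      (∀ ε : ℝ≥0∞, 0 < ε → ∃ N : ℕ, ∀ k ≥ N, ∀ l ≥ N, stateDist S L (σ k) (σ l) < ε) →
      ∃ τ : A →L[ℂ] ℂ, IsState τ ∧ Tendsto (fun k => stateDist S L (σ k) τ) atTop (𝓝 0) :=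
  statement10_general S hSdense L hLsmul u hu_pos hu_contr hu_approx huL
end

section
/- Let A be a separable C*-algebra, H a separable complex Hilbert space, and π : A → B(H) a *-representation. Let F ∈ B(H) satisfy F = F*, F² ≤ 1, and suppose [F,π(a)] and π(a)(1 − F²) are compact for every a ∈ A. Let J := {T ∈ B(H) : Tπ(a) and π(a)T are compact for all a ∈ A}, and let p be the orthogonal projection onto the closed linear span of {π(a)h : a ∈ A, h ∈ H}. Then there exists a positive operator h ∈ J with dense range such that [pFp, h] = 0. -/
/-!
With `T = pFp`, take `h = (1 - T²) + P₊ C P₊ + P₋ C P₋`, where `P_±` are the projections onto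
the `±1`-eigenspaces of `T` and `C` is a compact, positive, injective operator, which exists
because `H` is separable. Every summand commutes with `T`. Modulo compact operators `π(a)`
commutes with `F`, is fixed by `p` on both sides and satisfies `π(a)F² = π(a)`, and this forces
`(1 - T²)π(a)` and `π(a)(1 - T²)` to be compact. Since `T² ≤ 1`, `h ≥ 0`, and if `hx = 0` then
every summand kills `x`: `T²x = x` splits `x` into `±1`-eigenvectors of `T`, to which `x` is
orthogonal because `P_± x = 0`; so `h` is injective, and being self-adjoint it has dense range.
-/

open scoped InnerProductSpace
open Module.End

section Compression

variable {R : Type*} [Ring R] {p f x : R}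

theorem one_sub_compression_sq_mul_eq_zero (hpx : p * x = x) (hfx : Commute f x)
    (hxff : x * (f * f) = x) : (1 - p * f * p * (p * f * p)) * x = 0 := by
  have hpx' (y : R) : p * (x * y) = x * y := by rw [← mul_assoc, hpx]
  have hfx' (y : R) : f * (x * y) = x * (f * y) := by rw [← mul_assoc, hfx.eq, mul_assoc]
  rw [sub_mul, one_mul, sub_eq_zero]
  simp only [mul_assoc, hpx, hfx.eq, hpx', hfx', hxff]

theorem mul_one_sub_compression_sq_eq_zero (hxp : x * p = x) (hfx : Commute f x)
    (hxff : x * (f * f) = x) : x * (1 - p * f * p * (p * f * p)) = 0 := by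
  have hxp' (y : R) : x * (p * y) = x * y := by rw [← mul_assoc, hxp]
  have hxf' (y : R) : x * (f * y) = f * (x * y) := by rw [← mul_assoc, ← hfx.eq, mul_assoc]
  rw [mul_sub, mul_one, sub_eq_zero]
  simp only [mul_assoc, hxp, hxp', hxf']
  rw [← mul_assoc, (hfx.mul_left hfx).eq, hxff]

theorem IsStarProjection.compression_mul_self_le_one [PartialOrder R] [StarRing R]
    [StarOrderedRing R] (hp : IsStarProjection p) (hf : IsSelfAdjoint f) (hff : f * f ≤ 1) :
    p * f * p * (p * f * p) ≤ 1 := by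
  have hstar : star (p * f) = f * p := by rw [star_mul, hf.star_eq, hp.isSelfAdjoint.star_eq]
  have hpp (y : R) : p * (p * y) = p * y := by rw [← mul_assoc, hp.isIdempotentElem.eq]
  calc p * f * p * (p * f * p) = p * f * p * star (p * f) := by
        simp only [hstar, mul_assoc, hpp]
    _ ≤ p * f * 1 * star (p * f) := star_right_conjugate_le_conjugate hp.le_one _
    _ = p * (f * f) * star p := by simp only [hstar, hp.isSelfAdjoint.star_eq, mul_one, mul_assoc]
    _ ≤ p * 1 * star p := star_right_conjugate_le_conjugate hff _
    _ = p := by rw [hp.isSelfAdjoint.star_eq, mul_one, hp.isIdempotentElem.eq]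
    _ ≤ 1 := hp.le_one

end Compression

section CompactOperatorIdeal

variable (𝕜 E : Type*) [NontriviallyNormedField 𝕜] [NormedAddCommGroup E] [NormedSpace 𝕜 E]

def compactOperatorIdeal : TwoSidedIdeal (E →L[𝕜] E) :=
  .mk' {T | IsCompactOperator T} isCompactOperator_zero .add .neg
    (fun {S _} hT => hT.clm_comp S) (fun {_ S} hT => hT.comp_clm S)

variable {𝕜 E}

theorem mem_compactOperatorIdeal {T : E →L[𝕜] E} :
    T ∈ compactOperatorIdeal 𝕜 E ↔ IsCompactOperator T :=
  TwoSidedIdeal.mem_mk' _ _ _ _ _ _ T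

theorem isCompactOperator_iff_ringCon_mk'_eq_zero {T : E →L[𝕜] E} :
    IsCompactOperator T ↔ (compactOperatorIdeal 𝕜 E).ringCon.mk' T = 0 := by
  rw [← mem_compactOperatorIdeal, ← TwoSidedIdeal.mem_ker, TwoSidedIdeal.ker_ringCon_mk']

theorem isCompactOperator_one_sub_compression_sq_add_mul {p F X K : E →L[𝕜] E}
    (hpX : p * X = X) (hXp : X * p = X) (hFX : IsCompactOperator ⇑(F * X - X * F))
    (hXF : IsCompactOperator ⇑(X * (1 - F * F))) (hK : IsCompactOperator ⇑K) :
    IsCompactOperator ⇑((1 - p * F * p * (p * F * p) + K) * X) ∧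
      IsCompactOperator ⇑(X * (1 - p * F * p * (p * F * p) + K)) := by
  set q := (compactOperatorIdeal 𝕜 E).ringCon.mk'
  simp only [isCompactOperator_iff_ringCon_mk'_eq_zero] at hFX hXF hK ⊢
  have hfx : Commute (q F) (q X) := sub_eq_zero.mp (by simpa only [map_sub, map_mul] using hFX)
  have hxff : q X * (q F * q F) = q X := by
    rw [map_mul, map_sub, map_one, mul_sub, mul_one, sub_eq_zero] at hXF
    exact hXF.symm
  simp only [map_mul, map_add, map_sub, map_one, hK, add_zero]
  exact ⟨one_sub_compression_sq_mul_eq_zero (by rw [← map_mul, hpX]) hfx hxff,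
    mul_one_sub_compression_sq_eq_zero (by rw [← map_mul, hXp]) hfx hxff⟩

end CompactOperatorIdeal

namespace ContinuousLinearMap

variable {H : Type*} [NormedAddCommGroup H] [InnerProductSpace ℂ H] [CompleteSpace H]

theorem apply_eq_zero_of_nonneg_of_re_inner_self_eq_zero {A : H →L[ℂ] H} (hA : 0 ≤ A) {x : H}
    (hx : RCLike.re ⟪A x, x⟫_ℂ = 0) : A x = 0 := by
  obtain ⟨B, rfl⟩ := CStarAlgebra.nonneg_iff_eq_star_mul_self.mp hA
  rw [mul_apply_eq_comp, star_eq_adjoint, adjoint_inner_left, inner_self_eq_norm_sq,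
    sq_eq_zero_iff, norm_eq_zero] at hx
  rw [mul_apply_eq_comp, hx, map_zero]

theorem apply_eq_zero_of_le_of_apply_eq_zero {A B : H →L[ℂ] H} (hA : 0 ≤ A) (hAB : A ≤ B)
    {x : H} (hBx : B x = 0) : A x = 0 := by
  refine apply_eq_zero_of_nonneg_of_re_inner_self_eq_zero hA (le_antisymm ?_ ?_)
  · have := ((le_def A B).mp hAB).re_inner_nonneg_left x
    rwa [sub_apply, hBx, zero_sub, inner_neg_left, map_neg, neg_nonneg] at this
  · exact ((nonneg_iff_isPositive A).mp hA).re_inner_nonneg_left x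

theorem apply_eq_zero_of_conj_apply_eq_zero {P C : H →L[ℂ] H} (hP : IsSelfAdjoint P) (hC : 0 ≤ C)
    (hCinj : Function.Injective C) {x : H} (hx : (P * C * P) x = 0) : P x = 0 := by
  refine hCinj (apply_eq_zero_of_nonneg_of_re_inner_self_eq_zero hC ?_ |>.trans (map_zero C).symm)
  rw [← adjoint_inner_left, ← star_eq_adjoint, hP.star_eq, ← mul_apply_eq_comp,
    ← mul_apply_eq_comp, hx, inner_zero_left, map_zero]

theorem denseRange_of_isSelfAdjoint_of_injective {A : H →L[ℂ] H} (hA : IsSelfAdjoint A)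
    (hinj : Function.Injective A) : DenseRange A := by
  have : (LinearMap.range (A : H →ₗ[ℂ] H))ᗮ = ⊥ := by
    rw [orthogonal_range, ← star_eq_adjoint, hA.star_eq, LinearMap.ker_eq_bot]
    exact hinj
  exact Submodule.dense_iff_topologicalClosure_eq_top.mpr
    (Submodule.topologicalClosure_eq_top_iff.mpr this)

end ContinuousLinearMap

theorem isCompactOperator_rankOne {𝕜 E F : Type*} [RCLike 𝕜] [NormedAddCommGroup E]
    [NormedSpace 𝕜 E] [NormedAddCommGroup F] [InnerProductSpace 𝕜 F] (x : E) (y : F) :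
    IsCompactOperator ⇑(InnerProductSpace.rankOne 𝕜 x y) := by
  rw [InnerProductSpace.rankOne_def']
  exact (isCompactOperator_of_locallyCompactSpace_dom (innerSL 𝕜 y)).clm_comp
    (.toSpanSingleton 𝕜 x)

theorem exists_isCompactOperator_nonneg_injective (H : Type*) [NormedAddCommGroup H]
    [InnerProductSpace ℂ H] [CompleteSpace H] [TopologicalSpace.SeparableSpace H] :
    ∃ C : H →L[ℂ] H, IsCompactOperator ⇑C ∧ 0 ≤ C ∧ Function.Injective C := by
  -- `C = ∑ cₙ ⟪uₙ, ·⟫ uₙ` for a dense sequence `u`; `C x = 0` forces `x ⟂ uₙ` for every `n`.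
  have : Nonempty H := ⟨0⟩
  obtain ⟨u, hu⟩ := TopologicalSpace.exists_dense_seq H
  set c : ℕ → ℝ := fun n => ((2 : ℝ) ^ n * (1 + ‖u n‖ ^ 2))⁻¹
  have hc (n : ℕ) : 0 < c n := by positivity
  set A : ℕ → H →L[ℂ] H := fun n => (c n : ℂ) • InnerProductSpace.rankOne ℂ (u n) (u n)
  have hA_nonneg (n : ℕ) : 0 ≤ A n :=
    (ContinuousLinearMap.nonneg_iff_isPositive _).mpr
      ((InnerProductSpace.isPositive_rankOne_self _).smul_of_nonneg
        (Complex.zero_le_real.mpr (hc n).le))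
  have hA_norm (n : ℕ) : ‖A n‖ ≤ (1 / 2 : ℝ) ^ n := by
    simp only [A, norm_smul, Complex.norm_real, Real.norm_of_nonneg (hc n).le,
      InnerProductSpace.norm_rankOne, c]
    rw [div_pow, one_pow, one_div, mul_inv, mul_assoc]
    refine mul_le_of_le_one_right (by positivity) ?_
    rw [inv_mul_le_iff₀ (by positivity)]
    nlinarith
  have hA : Summable A := .of_norm_bounded summable_geometric_two hA_norm
  refine ⟨∑' n, A n, ?_, tsum_nonneg hA_nonneg, ?_⟩
  · refine isCompactOperator_of_tendsto hA.hasSum.tendsto_sum_nat (.of_forall fun N => ?_)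
    refine mem_compactOperatorIdeal.mp (sum_mem fun n _ => mem_compactOperatorIdeal.mpr ?_)
    exact (isCompactOperator_rankOne (u n) (u n)).smul _
  · rw [injective_iff_map_eq_zero]
    intro x hx
    refine hu.eq_zero_of_inner_left ℂ fun n => ?_
    have hAx := ContinuousLinearMap.apply_eq_zero_of_le_of_apply_eq_zero (hA_nonneg n)
      (hA.le_tsum n fun j _ => hA_nonneg j) hx
    simp only [A, smul_apply, InnerProductSpace.rankOne_apply, smul_eq_zero,
      Complex.ofReal_eq_zero, (hc n).ne', false_or] at hAx
    rcases hAx with h | h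
    · rw [← inner_conj_symm, h, map_zero]
    · rw [h, inner_zero_right]

theorem eq_zero_of_apply_apply_eq_sq_smul_of_mem_orthogonal_eigenspace {𝕜 E : Type*} [RCLike 𝕜]
    [NormedAddCommGroup E] [InnerProductSpace 𝕜 E] {T : E →ₗ[𝕜] E} {c : 𝕜} (hc : c ≠ 0)
    {x : E} (hTx : T (T x) = c ^ 2 • x) (h₁ : x ∈ (eigenspace T c)ᗮ)
    (h₂ : x ∈ (eigenspace T (-c))ᗮ) : x = 0 := by
  have hu : c • x + T x ∈ eigenspace T c := by
    rw [mem_eigenspace_iff, map_add, map_smul, hTx]; module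
  have hv : c • x - T x ∈ eigenspace T (-c) := by
    rw [mem_eigenspace_iff, map_sub, map_smul, hTx]; module
  have : ⟪(2 * c) • x, x⟫_𝕜 = 0 := by
    rw [show (2 * c) • x = (c • x + T x) + (c • x - T x) by module, inner_add_left,
      Submodule.inner_right_of_mem_orthogonal hu h₁, Submodule.inner_right_of_mem_orthogonal hv h₂,
      add_zero]
  simpa [inner_smul_left, hc] using this

section EigenCompression

open ContinuousLinearMap

variable {H : Type*} [NormedAddCommGroup H] [InnerProductSpace ℂ H] [CompleteSpace H]

noncomputable def eigenProjection (T : H →L[ℂ] H) (c : ℂ) : H →L[ℂ] H :=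
  (eigenspace (T : H →ₗ[ℂ] H) c).starProjection

theorem isSelfAdjoint_eigenProjection (T : H →L[ℂ] H) (c : ℂ) :
    IsSelfAdjoint (eigenProjection T c) :=
  isSelfAdjoint_starProjection _

theorem mul_eigenProjection (T : H →L[ℂ] H) (c : ℂ) :
    T * eigenProjection T c = c • eigenProjection T c := by
  ext x
  exact mem_eigenspace_iff.mp (Submodule.starProjection_apply_mem _ x)

theorem eigenProjection_mul {T : H →L[ℂ] H} (hT : IsSelfAdjoint T) {c : ℂ} (hc : star c = c) :
    eigenProjection T c * T = c • eigenProjection T c := by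
  have := congrArg star (mul_eigenProjection T c)
  rwa [star_mul, star_smul, hT.star_eq, (isSelfAdjoint_eigenProjection T c).star_eq, hc] at this

theorem commute_eigenProjection_mul_mul_eigenProjection {T : H →L[ℂ] H} (hT : IsSelfAdjoint T)
    {c : ℂ} (hc : star c = c) (X : H →L[ℂ] H) :
    Commute T (eigenProjection T c * X * eigenProjection T c) :=
  calc T * (eigenProjection T c * X * eigenProjection T c)
      _ = c • (eigenProjection T c * X * eigenProjection T c) := by
        rw [← mul_assoc, ← mul_assoc, mul_eigenProjection, smul_mul_assoc, smul_mul_assoc]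
      _ = eigenProjection T c * X * eigenProjection T c * T := by
        rw [mul_assoc _ _ T, eigenProjection_mul hT hc, mul_smul_comm]

noncomputable def eigenCompression (T C : H →L[ℂ] H) : H →L[ℂ] H :=
  eigenProjection T 1 * C * eigenProjection T 1 +
    eigenProjection T (-1) * C * eigenProjection T (-1)

variable {T C : H →L[ℂ] H}

theorem eigenCompression_nonneg (hC : 0 ≤ C) : 0 ≤ eigenCompression T C :=
  add_nonneg ((isSelfAdjoint_eigenProjection T 1).conjugate_nonneg hC)
    ((isSelfAdjoint_eigenProjection T (-1)).conjugate_nonneg hC)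

theorem isCompactOperator_eigenCompression (hC : IsCompactOperator ⇑C) :
    IsCompactOperator ⇑(eigenCompression T C) := by
  have hC' := mem_compactOperatorIdeal.mpr hC
  refine mem_compactOperatorIdeal.mp (add_mem ?_ ?_) <;>
    exact TwoSidedIdeal.mul_mem_right _ _ _ (TwoSidedIdeal.mul_mem_left _ _ _ hC')

theorem commute_eigenCompression (hT : IsSelfAdjoint T) (C : H →L[ℂ] H) :
    Commute T (eigenCompression T C) :=
  (commute_eigenProjection_mul_mul_eigenProjection hT (star_one ℂ) C).add_right
    (commute_eigenProjection_mul_mul_eigenProjection hT (by simp) C)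

theorem injective_one_sub_mul_self_add_eigenCompression (hT : T * T ≤ 1) (hC : 0 ≤ C)
    (hCinj : Function.Injective C) : Function.Injective ⇑(1 - T * T + eigenCompression T C) := by
  rw [injective_iff_map_eq_zero]
  intro x hx
  have hD : 0 ≤ 1 - T * T := sub_nonneg.mpr hT
  have hQ₁ := (isSelfAdjoint_eigenProjection T 1).conjugate_nonneg hC
  have hQ₂ := (isSelfAdjoint_eigenProjection T (-1)).conjugate_nonneg hC
  unfold eigenCompression at hx
  have hDx := apply_eq_zero_of_le_of_apply_eq_zero hD
    (le_add_of_nonneg_right (add_nonneg hQ₁ hQ₂)) hx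
  have hQ₁x := apply_eq_zero_of_le_of_apply_eq_zero hQ₁
    ((le_add_of_nonneg_right hQ₂).trans (le_add_of_nonneg_left hD)) hx
  have hQ₂x := apply_eq_zero_of_le_of_apply_eq_zero hQ₂
    ((le_add_of_nonneg_left hQ₁).trans (le_add_of_nonneg_left hD)) hx
  refine eq_zero_of_apply_apply_eq_sq_smul_of_mem_orthogonal_eigenspace (T := (T : H →ₗ[ℂ] H))
    one_ne_zero ?_ ?_ ?_
  · rw [sub_apply, sub_eq_zero] at hDx
    simpa using hDx.symm
  · rw [← Submodule.starProjection_apply_eq_zero_iff]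
    exact apply_eq_zero_of_conj_apply_eq_zero (isSelfAdjoint_eigenProjection T 1) hC hCinj hQ₁x
  · rw [← Submodule.starProjection_apply_eq_zero_iff]
    exact apply_eq_zero_of_conj_apply_eq_zero (isSelfAdjoint_eigenProjection T _) hC hCinj hQ₂x

end EigenCompression

theorem statement16_general
    {A : Type*} [NonUnitalCStarAlgebra A]
    {H : Type*} [NormedAddCommGroup H] [InnerProductSpace ℂ H] [CompleteSpace H]
    [TopologicalSpace.SeparableSpace H]
    -- the *-representation π
    (π : A →⋆ₙₐ[ℂ] (H →L[ℂ] H))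
    -- F self-adjoint with F² ≤ 1
    (F : H →L[ℂ] H) (hFsa : IsSelfAdjoint F)
    (hFsq : (1 - F * F).IsPositive)
    -- compactness assumptions
    (hcomm : ∀ a : A, IsCompactOperator ⇑(F * π a - π a * F))
    (hcpt : ∀ a : A, IsCompactOperator ⇑(π a * (1 - F * F))) :
    -- p : the orthogonal projection onto the closed linear span of {π(a)h}
    ∀ p : H →L[ℂ] H,
      IsSelfAdjoint p → p * p = p →
      Set.range p = closure
        ((Submodule.span ℂ {x : H | ∃ (a : A) (h : H), π a h = x} : Submodule ℂ H) : Set H) →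
      -- there is a positive h ∈ J with dense range commuting with pFp
      ∃ h : H →L[ℂ] H,
        h.IsPositive ∧
        (∀ a : A, IsCompactOperator ⇑(h * π a) ∧ IsCompactOperator ⇑(π a * h)) ∧
        DenseRange ⇑h ∧
        (p * F * p) * h = h * (p * F * p) := by
  intro p hpsa hpp hrange
  have hp : IsStarProjection p := ⟨hpp, hpsa⟩
  have hpπ (a : A) : p * π a = π a := by
    ext x
    obtain ⟨y, hy⟩ : π a x ∈ Set.range p :=
      hrange ▸ subset_closure (Submodule.subset_span ⟨a, x, rfl⟩)
    rw [mul_apply_eq_comp, ← hy, ← mul_apply_eq_comp, hpp]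
  have hπp (a : A) : π a * p = π a := by
    simpa [hpsa.star_eq, map_star] using congrArg star (hpπ (star a))
  set T := p * F * p
  have hT : IsSelfAdjoint T := by simpa [hpsa.star_eq] using hFsa.conjugate p
  have hTT : T * T ≤ 1 := hp.compression_mul_self_le_one hFsa hFsq
  obtain ⟨C, hCcpt, hC, hCinj⟩ := exists_isCompactOperator_nonneg_injective H
  have hpos : 0 ≤ 1 - T * T + eigenCompression T C :=
    add_nonneg (sub_nonneg.mpr hTT) (eigenCompression_nonneg hC)
  refine ⟨1 - T * T + eigenCompression T C, (ContinuousLinearMap.nonneg_iff_isPositive _).mp hpos,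
    fun a => isCompactOperator_one_sub_compression_sq_add_mul (hpπ a) (hπp a) (hcomm a) (hcpt a)
      (isCompactOperator_eigenCompression hCcpt),
    ContinuousLinearMap.denseRange_of_isSelfAdjoint_of_injective (IsSelfAdjoint.of_nonneg hpos)
      (injective_one_sub_mul_self_add_eigenCompression hTT hC hCinj), ?_⟩
  exact ((Commute.one_right T).sub_right ((Commute.refl T).mul_right (Commute.refl T))).add_right
    (commute_eigenCompression hT C)

/-- Let `A` be a separable C*-algebra, `H` a separable complex Hilbert
space, and `π : A → B(H)` a *-representation.  Let `F ∈ B(H)` satisfy `F = F*`, `F² ≤ 1`,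
and suppose `[F,π(a)]` and `π(a)(1 − F²)` are compact for every `a ∈ A`.  Let
`J := {T : Tπ(a), π(a)T compact for all a}` and `p` the orthogonal projection onto the
closed linear span of `{π(a)h}`.  Then there exists a positive operator `h ∈ J` with
dense range such that `[pFp, h] = 0`. -/
theorem statement16
    {A : Type*} [NonUnitalCStarAlgebra A] [TopologicalSpace.SeparableSpace A]
    {H : Type*} [NormedAddCommGroup H] [InnerProductSpace ℂ H] [CompleteSpace H]
    [TopologicalSpace.SeparableSpace H]
    -- the *-representation π
    (π : A →⋆ₙₐ[ℂ] (H →L[ℂ] H))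
    -- F self-adjoint with F² ≤ 1
    (F : H →L[ℂ] H) (hFsa : IsSelfAdjoint F)
    (hFsq : (1 - F * F).IsPositive)
    -- compactness assumptions
    (hcomm : ∀ a : A, IsCompactOperator ⇑(F * π a - π a * F))
    (hcpt : ∀ a : A, IsCompactOperator ⇑(π a * (1 - F * F))) :
    -- p : the orthogonal projection onto the closed linear span of {π(a)h}
    ∀ p : H →L[ℂ] H,
      IsSelfAdjoint p → p * p = p →
      Set.range p = closure
        ((Submodule.span ℂ {x : H | ∃ (a : A) (h : H), π a h = x} : Submodule ℂ H) : Set H) →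
      -- there is a positive h ∈ J with dense range commuting with pFp
      ∃ h : H →L[ℂ] H,
        h.IsPositive ∧
        (∀ a : A, IsCompactOperator ⇑(h * π a) ∧ IsCompactOperator ⇑(π a * h)) ∧
        DenseRange ⇑h ∧
        (p * F * p) * h = h * (p * F * p) :=
  statement16_general π F hFsa hFsq hcomm hcpt
end

section
/- Let X be a topological space and (u_n)_{n≥0} a nondecreasing sequence of continuous functions u_n : X → [0,1] with u_n(x) → 1 for every x ∈ X, and set d_n := u_{n+1} − u_n ≥ 0. Fix 0 < ε < 1 and define c(x) := Σ_{n=0}^{∞} ε^{-n} d_n(x) ∈ [0,∞]. Then: (a) for every t ∈ (0,1), every k ∈ ℕ and every x ∈ X with u_k(x) < t, one has c(x) ≥ (1 − t)·ε^{-k}; (b) if in addition each set {x ∈ X : u_n(x) ≥ t} is compact for every t ∈ (0,1) and every n (e.g. each u_n vanishes at infinity on a locally compact space), then c tends to infinity at infinity: for every M > 0 there is a compact set K ⊆ X with c(x) ≥ M for all x ∉ K. -/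
open Filter Topology
open scoped ENNReal

/-- Let `X` be a topological space and `(u_n)` a nondecreasing
sequence of continuous functions `u_n : X → [0,1]` with `u_n(x) → 1` for every `x`, and
let `d_n := u_{n+1} − u_n ≥ 0`.  Fix `0 < ε < 1` and let
`c(x) := Σ_n ε^{-n} d_n(x) ∈ [0,∞]`.  Then:
(a) for every `t ∈ (0,1)`, `k ∈ ℕ` and `x ∈ X` with `u_k(x) < t` one has
    `c(x) ≥ (1−t)·ε^{-k}`;
(b) if moreover each set `{x : u_n(x) ≥ t}` is compact (for `t ∈ (0,1)`, `n ∈ ℕ`), then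
    `c` tends to infinity at infinity: for each `M > 0` there is a compact `K ⊆ X` with
    `c(x) ≥ M` for all `x ∉ K`. -/
theorem statement19 {X : Type*} [TopologicalSpace X]
    (u : ℕ → X → ℝ)
    (hcont : ∀ n, Continuous (u n))
    (hrange : ∀ n x, u n x ∈ Set.Icc (0 : ℝ) 1)
    (hmono : ∀ x, Monotone fun n => u n x)
    (hpt : ∀ x : X, Tendsto (fun n => u n x) atTop (𝓝 1))
    (ε : ℝ) (hε0 : 0 < ε) (hε1 : ε < 1) :
    -- (a)
    (∀ t ∈ Set.Ioo (0 : ℝ) 1, ∀ (k : ℕ) (x : X), u k x < t →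
      ENNReal.ofReal ((1 - t) / ε ^ k) ≤
        ∑' n : ℕ, ENNReal.ofReal ((u (n + 1) x - u n x) / ε ^ n)) ∧
    -- (b)
    ((∀ t ∈ Set.Ioo (0 : ℝ) 1, ∀ n : ℕ, IsCompact {x : X | t ≤ u n x}) →
      ∀ M > (0 : ℝ), ∃ K : Set X, IsCompact K ∧ ∀ x ∉ K,
        ENNReal.ofReal M ≤ ∑' n : ℕ, ENNReal.ofReal ((u (n + 1) x - u n x) / ε ^ n)) := by
  have hd : ∀ n x, 0 ≤ u (n + 1) x - u n x := fun n x =>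
    sub_nonneg.mpr (hmono x (Nat.le_succ n))
  have ha : ∀ t ∈ Set.Ioo (0 : ℝ) 1, ∀ (k : ℕ) (x : X), u k x < t →
      ENNReal.ofReal ((1 - t) / ε ^ k) ≤
        ∑' n : ℕ, ENNReal.ofReal ((u (n + 1) x - u n x) / ε ^ n) := by
    intro t ht k x hx
    -- telescoping sum: ∑ n, (u (n+k+1) x - u (n+k) x) = 1 - u k x
    have htel : HasSum (fun n => u (n + k + 1) x - u (n + k) x) (1 - u k x) := by
      rw [hasSum_iff_tendsto_nat_of_nonneg (fun n => hd (n + k) x)]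
      have hsum : ∀ N : ℕ, ∑ i ∈ Finset.range N, (u (i + k + 1) x - u (i + k) x)
          = u (N + k) x - u k x := by
        intro N
        have := Finset.sum_range_sub (f := fun i => u (i + k) x) N
        simpa [add_right_comm] using this
      simp only [hsum]
      have h1 : Tendsto (fun N : ℕ => u (N + k) x) atTop (𝓝 1) :=
        (hpt x).comp (tendsto_add_atTop_nat k)
      simpa using h1.sub tendsto_const_nhds
    -- shift: full sum ≥ tail sum
    have hshift : ∑' n : ℕ, ENNReal.ofReal ((u (n + k + 1) x - u (n + k) x) / ε ^ (n + k))
        ≤ ∑' n : ℕ, ENNReal.ofReal ((u (n + 1) x - u n x) / ε ^ n) := by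
      have := ENNReal.tsum_comp_le_tsum_of_injective (add_left_injective k)
        (fun n => ENNReal.ofReal ((u (n + 1) x - u n x) / ε ^ n))
      simpa using this
    refine le_trans ?_ hshift
    -- termwise: 1/ε^(n+k) ≥ 1/ε^k
    have hterm : ∀ n : ℕ,
        ENNReal.ofReal ((ε ^ k)⁻¹) * ENNReal.ofReal (u (n + k + 1) x - u (n + k) x)
          ≤ ENNReal.ofReal ((u (n + k + 1) x - u (n + k) x) / ε ^ (n + k)) := by
      intro n
      rw [← ENNReal.ofReal_mul (by positivity)]
      apply ENNReal.ofReal_le_ofReal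
      rw [div_eq_mul_inv, mul_comm (u (n + k + 1) x - u (n + k) x)]
      have h1 : (ε ^ k)⁻¹ ≤ (ε ^ (n + k))⁻¹ :=
        inv_anti₀ (pow_pos hε0 _)
          (pow_le_pow_of_le_one hε0.le hε1.le (Nat.le_add_left k n))
      exact mul_le_mul_of_nonneg_right h1 (hd (n + k) x)
    calc ENNReal.ofReal ((1 - t) / ε ^ k)
        ≤ ENNReal.ofReal ((1 - u k x) / ε ^ k) := by
          apply ENNReal.ofReal_le_ofReal
          gcongr

      _ = ENNReal.ofReal ((ε ^ k)⁻¹) * ENNReal.ofReal (1 - u k x) := by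
          rw [← ENNReal.ofReal_mul (by positivity), div_eq_mul_inv, mul_comm]
      _ = ENNReal.ofReal ((ε ^ k)⁻¹) *
            ∑' n : ℕ, ENNReal.ofReal (u (n + k + 1) x - u (n + k) x) := by
          rw [← ENNReal.ofReal_tsum_of_nonneg (fun n => hd (n + k) x) htel.summable,
            htel.tsum_eq]
      _ = ∑' n : ℕ, ENNReal.ofReal ((ε ^ k)⁻¹) *
            ENNReal.ofReal (u (n + k + 1) x - u (n + k) x) := by
          rw [ENNReal.tsum_mul_left]
      _ ≤ _ := ENNReal.tsum_le_tsum hterm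
  refine ⟨ha, ?_⟩
  intro hcomp M hM
  -- choose k with (1/2)/ε^k ≥ M, i.e. ε^k ≤ 1/(2M)
  obtain ⟨k, hk⟩ := exists_pow_lt_of_lt_one (by positivity : (0:ℝ) < 1 / (2 * M)) hε1
  refine ⟨{x : X | (1:ℝ)/2 ≤ u k x}, hcomp (1/2) (by norm_num) k, fun x hx => ?_⟩
  have hux : u k x < 1/2 := by simpa [Set.mem_setOf_eq, not_le] using hx
  have := ha (1/2) (by norm_num) k x hux
  refine le_trans ?_ this
  apply ENNReal.ofReal_le_ofReal
  have hεk : 0 < ε ^ k := pow_pos hε0 k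
  rw [le_div_iff₀ hεk]
  calc M * ε ^ k ≤ M * (1 / (2 * M)) := by
        have := hk.le
        gcongr
    _ = 1 / 2 := by field_simp
    _ ≤ 1 - 1 / 2 := by norm_num
end
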